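/- arXiv:1311.2019 — 8 statements merged into one kernel-verified Lean document; each statement's English description precedes it below -/
import Mathlib

section
/- Let M ∈ ℤ^{n×n} be nonsingular. If the lattice graph 𝒢(M) is linearly symmetric, then for all i, j ∈ {1,…,n} the projection of 𝒢(M) over e_i is isomorphic (as a graph) to the projection of 𝒢(M) over e_j. -/
open Matrix

/-- The subgroup (submodule) `Mℤⁿ` generated by the columns of `M`. -/
def colSpan {ι : Type*} [Fintype ι] [DecidableEq ι] (M : Matrix ι ι ℤ) :
    Submodule ℤ (ι → ℤ) :=
  LinearMap.range M.mulVecLin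

/-- The vertex set `ℤⁿ/Mℤⁿ` of the lattice graph. -/
abbrev LatticeVertex {ι : Type*} [Fintype ι] [DecidableEq ι] (M : Matrix ι ι ℤ) :=
  (ι → ℤ) ⧸ colSpan M

/-- The `i`-th standard basis vector of `ℤⁿ`. -/
def stdBasis {ι : Type*} [DecidableEq ι] (i : ι) : ι → ℤ := Pi.single i 1

/-- The lattice graph `𝒢(M)`. -/
def latticeGraph {ι : Type*} [Fintype ι] [DecidableEq ι] (M : Matrix ι ι ℤ) :
    SimpleGraph (LatticeVertex M) where
  Adj v w := v ≠ w ∧ ∃ i : ι,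
      v - w = Submodule.Quotient.mk (stdBasis i) ∨
      w - v = Submodule.Quotient.mk (stdBasis i)
  symm := ⟨by rintro v w ⟨hne, i, h⟩; exact ⟨hne.symm, i, h.symm⟩⟩
  loopless := ⟨fun v h => h.1 rfl⟩

/-- The subgraph of `𝒢(M)` spanned by the directions in `S`. -/
def spannedSubgraph {ι : Type*} [Fintype ι] [DecidableEq ι] (M : Matrix ι ι ℤ) (S : Set ι) :
    SimpleGraph (AddSubgroup.closure
      ((fun i => (Submodule.Quotient.mk (stdBasis i) : LatticeVertex M)) '' S)) where
  Adj v w := v ≠ w ∧ ∃ i ∈ S,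
      (v : LatticeVertex M) - (w : LatticeVertex M) = Submodule.Quotient.mk (stdBasis i) ∨
      (w : LatticeVertex M) - (v : LatticeVertex M) = Submodule.Quotient.mk (stdBasis i)
  symm := ⟨by rintro v w ⟨hne, i, hiS, h⟩; exact ⟨hne.symm, i, hiS, h.symm⟩⟩
  loopless := ⟨fun v h => h.1 rfl⟩

/-- The projection of `𝒢(M)` over `e_j`: the subgraph spanned by all other directions. -/
def projGraph {ι : Type*} [Fintype ι] [DecidableEq ι] (M : Matrix ι ι ℤ) (j : ι) :=
  spannedSubgraph M {i | i ≠ j}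

/-- The torus graph `T(a₁,…,aₙ)`. -/
def torusGraph {n : ℕ} (a : Fin n → ℕ) : SimpleGraph (∀ i, ZMod (a i)) where
  Adj x y := x ≠ y ∧ ∃ i, (∀ j, j ≠ i → x j = y j) ∧ (x i = y i + 1 ∨ y i = x i + 1)
  symm := ⟨by
    rintro x y ⟨hne, i, hj, h⟩
    exact ⟨hne.symm, i, fun j hji => (hj j hji).symm, h.symm⟩⟩
  loopless := ⟨fun x h => h.1 rfl⟩

/-- A signed permutation matrix: exactly one nonzero entry, equal to `±1`,
in each row and each column. -/
def IsSignedPerm {n : ℕ} (P : Matrix (Fin n) (Fin n) ℤ) : Prop :=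
  (∀ i j, P i j = 0 ∨ P i j = 1 ∨ P i j = -1) ∧
  (∀ i, ∃! j, P i j ≠ 0) ∧ (∀ j, ∃! i, P i j ≠ 0)

/-- `𝒢(M)` is linearly symmetric: for every `i` there is a signed permutation matrix
inducing an automorphism of `𝒢(M)` sending `e₁` to `±e_i`. -/
def IsLinearlySymmetric {n : ℕ} (M : Matrix (Fin n) (Fin n) ℤ) : Prop :=
  ∀ i : Fin n, ∃ P : Matrix (Fin n) (Fin n) ℤ, IsSignedPerm P ∧
    (∃ Q : Matrix (Fin n) (Fin n) ℤ, P * M = M * Q) ∧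
    (P.mulVec (stdBasis (⟨0, i.pos⟩ : Fin n)) = stdBasis i ∨
      P.mulVec (stdBasis (⟨0, i.pos⟩ : Fin n)) = -stdBasis i)

/-!
The linear automorphism `x ↦ Px` of `ℤⁿ` preserves `Mℤⁿ`, and so does its inverse `Pᵀ`: integer
orthogonal matrices form a finite group, so `Pᵀ = P⁻¹` is a power of `P`. Hence `P` induces a group
automorphism of `ℤⁿ/Mℤⁿ` sending each generator `e_k` to `±e_{σ k}` for a permutation `σ`, and such
an automorphism carries the subgraph spanned by `S` onto the subgraph spanned by `σ '' S`. Taking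
`S = {k | k ≠ 1}` with `σ 1 = i` shows that every projection is isomorphic to the projection
over `e₁`.
-/

section OrthogonalGroup

variable {ι : Type*} [Fintype ι] [DecidableEq ι]

lemma abs_apply_le_one_of_mem_orthogonalGroup {A : Matrix ι ι ℤ}
    (hA : A ∈ orthogonalGroup ι ℤ) (i j : ι) : |A i j| ≤ 1 := by
  have hcol : ∑ r, A r j * A r j = 1 := by
    simpa [Matrix.mul_apply] using congrFun₂ ((mem_orthogonalGroup_iff' ι ℤ).1 hA) j j
  rw [abs_le_one_iff_mul_self_le_one, ← hcol]
  exact Finset.single_le_sum (fun r _ => mul_self_nonneg (A r j)) (Finset.mem_univ i)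

instance : Finite (orthogonalGroup ι ℤ) := by
  have hsub : (orthogonalGroup ι ℤ : Set (Matrix ι ι ℤ)) ⊆
      Set.univ.pi fun _ => Set.univ.pi fun _ => Set.Icc (-1) 1 :=
    fun A hA i _ j _ => abs_le.1 (abs_apply_le_one_of_mem_orthogonalGroup hA i j)
  exact ((Set.Finite.pi fun _ => Set.Finite.pi fun _ => Set.finite_Icc (-1 : ℤ) 1).subset
    hsub).to_subtype

lemma exists_transpose_eq_pow {P : Matrix ι ι ℤ} (hP : Pᵀ * P = 1) : ∃ m : ℕ, Pᵀ = P ^ m := by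
  let U : orthogonalGroup ι ℤ := ⟨P, (mem_orthogonalGroup_iff' ι ℤ).2 hP⟩
  obtain ⟨m, hm⟩ := (isOfFinOrder_of_finite U).mem_powers_iff_mem_zpowers.2
    (inv_mem (Subgroup.mem_zpowers U))
  exact ⟨m, congrArg Subtype.val hm.symm⟩

end OrthogonalGroup

lemma stdBasis_apply {ι : Type*} [DecidableEq ι] (i j : ι) :
    stdBasis i j = if j = i then 1 else 0 :=
  Pi.single_apply i 1 j

section Lattice

variable {ι : Type*} [Fintype ι] [DecidableEq ι] {M : Matrix ι ι ℤ}

local notation "𝐞" k:max => (Submodule.Quotient.mk (stdBasis k) : LatticeVertex M)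

lemma mulVec_stdBasis_apply (A : Matrix ι ι ℤ) (k r : ι) : (A *ᵥ stdBasis k) r = A r k :=
  congrFun (mulVec_single_one A k) r

lemma colSpan_le_comap_mulVecLin {A B : Matrix ι ι ℤ} (h : A * M = M * B) :
    colSpan M ≤ (colSpan M).comap A.mulVecLin := by
  rintro _ ⟨y, rfl⟩
  exact ⟨B *ᵥ y, by simp [mulVec_mulVec, h]⟩

lemma exists_addEquiv_mk_mulVec {P Q : Matrix ι ι ℤ} (hP : Pᵀ * P = 1) (hPQ : P * M = M * Q) :
    ∃ E : LatticeVertex M ≃+ LatticeVertex M,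
      ∀ x, E (Submodule.Quotient.mk x) = Submodule.Quotient.mk (P *ᵥ x) := by
  obtain ⟨m, hm⟩ := exists_transpose_eq_pow hP
  have hPtM : Pᵀ * M = M * Q ^ m := by
    rw [hm]
    exact Eq.symm ((show SemiconjBy M Q P from hPQ.symm).pow_right m)
  have hPPt : P * Pᵀ = 1 := mul_eq_one_comm.1 hP
  let f := (colSpan M).mapQ _ P.mulVecLin (colSpan_le_comap_mulVecLin hPQ)
  let g := (colSpan M).mapQ _ Pᵀ.mulVecLin (colSpan_le_comap_mulVecLin hPtM)
  refine ⟨(LinearEquiv.ofLinearMap f g ?_ ?_).toAddEquiv, fun x => rfl⟩ <;>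
  · apply Submodule.linearMap_qext
    refine LinearMap.ext fun x => ?_
    simp only [f, g, LinearMap.comp_apply, Submodule.mkQ_apply, Submodule.mapQ_apply,
      mulVecLin_apply, mulVec_mulVec, hP, hPPt, one_mulVec, LinearMap.id_apply]

def PermutesBasisUpToSign (E : LatticeVertex M ≃+ LatticeVertex M) (σ : Equiv.Perm ι) : Prop :=
  ∀ k, E (𝐞 k) = 𝐞 (σ k) ∨ E (𝐞 k) = -𝐞 (σ k)

namespace PermutesBasisUpToSign

variable {E : LatticeVertex M ≃+ LatticeVertex M} {σ : Equiv.Perm ι} {S T : Set ι}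

lemma symm (h : PermutesBasisUpToSign E σ) : PermutesBasisUpToSign E.symm σ.symm := by
  intro k
  rcases h (σ.symm k) with hk | hk <;> rw [Equiv.apply_symm_apply] at hk
  · exact Or.inl (E.symm_apply_eq.2 hk.symm)
  · exact Or.inr (E.symm_apply_eq.2 (by rw [map_neg, hk, neg_neg]))

lemma apply_mem_closure (h : PermutesBasisUpToSign E σ) (hST : ∀ k ∈ S, σ k ∈ T)
    {x : LatticeVertex M} (hx : x ∈ AddSubgroup.closure ((fun k => 𝐞 k) '' S)) :
    E x ∈ AddSubgroup.closure ((fun k => 𝐞 k) '' T) := by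
  refine (AddSubgroup.closure_le (K := (AddSubgroup.closure _).comap E.toAddMonoidHom)).2 ?_ hx
  rintro _ ⟨k, hk, rfl⟩
  have hmem : 𝐞 (σ k) ∈ AddSubgroup.closure ((fun k => 𝐞 k) '' T) :=
    AddSubgroup.subset_closure ⟨σ k, hST k hk, rfl⟩
  show E (𝐞 k) ∈ AddSubgroup.closure ((fun k => 𝐞 k) '' T)
  rcases h k with hE | hE
  · exact hE ▸ hmem
  · exact hE ▸ neg_mem hmem

lemma exists_sub_eq (h : PermutesBasisUpToSign E σ) (hST : ∀ k ∈ S, σ k ∈ T)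
    {v w : LatticeVertex M} (hvw : ∃ k ∈ S, v - w = 𝐞 k ∨ w - v = 𝐞 k) :
    ∃ k ∈ T, E v - E w = 𝐞 k ∨ E w - E v = 𝐞 k := by
  obtain ⟨k, hk, hd⟩ := hvw
  refine ⟨σ k, hST k hk, ?_⟩
  rw [← neg_sub v w] at hd
  rw [← map_sub, ← map_sub, ← neg_sub v w, map_neg]
  generalize v - w = x at hd ⊢
  rcases hd with rfl | hd
  · rcases h k with hE | hE <;> simp [hE]
  · rw [neg_eq_iff_eq_neg.1 hd]
    rcases h k with hE | hE <;> simp [hE]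

def spannedSubgraphIso (h : PermutesBasisUpToSign E σ) (hST : ∀ k, σ k ∈ T ↔ k ∈ S) :
    spannedSubgraph M S ≃g spannedSubgraph M T where
  toEquiv := E.toEquiv.subtypeEquiv fun x =>
    ⟨h.apply_mem_closure fun k hk => (hST k).2 hk, fun hx => by
      simpa using h.symm.apply_mem_closure (fun k hk => (hST _).1 (by simpa using hk)) hx⟩
  map_rel_iff' {v w} := by
    refine and_congr (by simp) ⟨fun hvw => ?_, h.exists_sub_eq fun k hk => (hST k).2 hk⟩
    simpa using h.symm.exists_sub_eq (fun k hk => (hST _).1 (by simpa using hk)) hvw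

lemma nonempty_projGraph_iso (h : PermutesBasisUpToSign E σ) (b : ι) :
    Nonempty (projGraph M b ≃g projGraph M (σ b)) :=
  ⟨h.spannedSubgraphIso fun _ => σ.injective.ne_iff⟩

end PermutesBasisUpToSign

end Lattice

namespace IsSignedPerm

variable {n : ℕ} {P : Matrix (Fin n) (Fin n) ℤ}

lemma exists_perm (hP : IsSignedPerm P) :
    ∃ σ : Equiv.Perm (Fin n), ∀ k r, P r k ≠ 0 ↔ r = σ k := by
  choose r hr hu using hP.2.2
  have hinj : Function.Injective r := fun k l hkl => (hP.2.1 (r k)).unique (hr k) (hkl ▸ hr l)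
  exact ⟨Equiv.ofBijective r (Finite.injective_iff_bijective.1 hinj),
    fun k s => ⟨hu k s, fun hs => hs ▸ hr k⟩⟩

variable {σ : Equiv.Perm (Fin n)}

lemma mul_self_apply_perm (hP : IsSignedPerm P) (hσ : ∀ k r, P r k ≠ 0 ↔ r = σ k) (k : Fin n) :
    P (σ k) k * P (σ k) k = 1 := by
  rcases hP.1 (σ k) k with h | h | h
  · exact absurd h ((hσ k _).2 rfl)
  all_goals simp [h]

lemma transpose_mul_self (hP : IsSignedPerm P) (hσ : ∀ k r, P r k ≠ 0 ↔ r = σ k) :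
    Pᵀ * P = 1 := by
  ext k l
  have hzero : ∀ r, r ≠ σ k → P r k = 0 := fun r hr => not_imp_comm.1 (hσ k r).1 hr
  rw [mul_apply, Finset.sum_eq_single (σ k) (fun r _ hr => by simp [hzero r hr]) (by simp),
    transpose_apply]
  by_cases hkl : k = l
  · rw [← hkl, one_apply_eq, hP.mul_self_apply_perm hσ]
  · rw [one_apply_ne hkl, not_imp_comm.1 (hσ l (σ k)).1 (σ.injective.ne hkl), mul_zero]

lemma mulVec_stdBasis (hP : IsSignedPerm P) (hσ : ∀ k r, P r k ≠ 0 ↔ r = σ k) (k : Fin n) :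
    P *ᵥ stdBasis k = stdBasis (σ k) ∨ P *ᵥ stdBasis k = -stdBasis (σ k) := by
  have hcol : P *ᵥ stdBasis k = P (σ k) k • stdBasis (σ k) := by
    ext r
    rw [mulVec_stdBasis_apply, Pi.smul_apply, stdBasis_apply, smul_eq_mul]
    split_ifs with h
    · rw [h, mul_one]
    · rw [mul_zero]
      exact not_imp_comm.1 (hσ k r).1 h
  rcases hP.1 (σ k) k with h | h | h
  · exact absurd h ((hσ k _).2 rfl)
  · exact Or.inl (by rw [hcol, h, one_smul])
  · exact Or.inr (by rw [hcol, h, neg_one_smul])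

lemma nonempty_projGraph_iso (hP : IsSignedPerm P) {M Q : Matrix (Fin n) (Fin n) ℤ}
    (hPQ : P * M = M * Q) {b i : Fin n}
    (hb : P *ᵥ stdBasis b = stdBasis i ∨ P *ᵥ stdBasis b = -stdBasis i) :
    Nonempty (projGraph M b ≃g projGraph M i) := by
  obtain ⟨σ, hσ⟩ := hP.exists_perm
  obtain ⟨E, hE⟩ := exists_addEquiv_mk_mulVec (hP.transpose_mul_self hσ) hPQ
  have hEσ : PermutesBasisUpToSign E σ := fun k => by
    rcases hP.mulVec_stdBasis hσ k with h | h
    · exact Or.inl (by rw [hE, h])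
    · exact Or.inr (by rw [hE, h, Submodule.Quotient.mk_neg])
  have hσb : σ b = i := by
    refine ((hσ b i).1 ?_).symm
    rw [← mulVec_stdBasis_apply P b i]
    rcases hb with h | h <;> simp [h, stdBasis_apply]
  exact hσb ▸ hEσ.nonempty_projGraph_iso b

end IsSignedPerm

theorem projections_isomorphic_of_linearlySymmetric_general {n : ℕ}
    (M : Matrix (Fin n) (Fin n) ℤ)
    (hsym : IsLinearlySymmetric M) (i j : Fin n) :
    Nonempty (projGraph M i ≃g projGraph M j) := by
  have hfirst : ∀ i, Nonempty (projGraph M ⟨0, i.pos⟩ ≃g projGraph M i) := fun i => by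
    obtain ⟨P, hP, ⟨Q, hPQ⟩, hPe⟩ := hsym i
    exact hP.nonempty_projGraph_iso hPQ hPe
  obtain ⟨ei⟩ := hfirst i
  obtain ⟨ej⟩ := hfirst j
  exact ⟨ei.symm.trans ej⟩

/-- all projections of a linearly symmetric lattice graph are isomorphic. -/
theorem projections_isomorphic_of_linearlySymmetric {n : ℕ}
    (M : Matrix (Fin n) (Fin n) ℤ) (hM : M.det ≠ 0)
    (hsym : IsLinearlySymmetric M) (i j : Fin n) :
    Nonempty (projGraph M i ≃g projGraph M j) :=
  projections_isomorphic_of_linearlySymmetric_general M hsym i j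
end

section
/- Let M ∈ ℤ^{3×3} be nonsingular. If the lattice graph 𝒢(M) is linearly symmetric, then there exist integers a, b, c such that 𝒢(M) is isomorphic to the lattice graph of a nonsingular matrix M′ which is either the circulant matrix with rows (a,c,b),(b,a,c),(c,b,a) or the matrix with rows (a,b,c),(a,c,−b−c),(a,−b−c,b). -/
open Matrix

/-!
A signed permutation matrix inducing an automorphism of `𝒢(M)` preserves the lattice `Mℤ³`.
Linear symmetry provides such symmetries moving `e₁` to `±e₂` and to `±e₃`; a product of them is
a signed 3-cycle, and after flipping the signs of some coordinates, which does not change the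
graph up to isomorphism, the lattice `L` becomes invariant under the cyclic shift
`(x₀, x₁, x₂) ↦ (x₂, x₀, x₁)`.

On the plane `x₀ + x₁ + x₂ = 0` the shift acts as multiplication by a primitive cube root of
unity `ω`, so the plane part of `L` is an ideal of the Euclidean ring `ℤ[ω]`: it is spanned by any
of its nonzero elements `w` of minimal norm together with the shift of `w`. Let `u ∈ L` have a
coordinate sum dividing those of all elements of `L`. Since `ℤ[ω]/(1 - ω)` has order three,
adding to `u` a suitable element of the plane part gives `v` with `shift v - v ∈ {0, w, -w}`.
If it is `0`, `v` is constant and `L` is spanned by `v`, `w` and `shift² w`, the columns of the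
second shape; otherwise `L` is spanned by `v` and its two shifts, the columns of a circulant.
-/

section SignFlip

variable {ι : Type*}

def signFlip (η : ι → ℤˣ) : (ι → ℤ) ≃ₗ[ℤ] (ι → ℤ) :=
  LinearEquiv.piCongrRight fun i => LinearEquiv.smulOfUnit (η i)

@[simp]
lemma signFlip_apply (η : ι → ℤˣ) (x : ι → ℤ) (i : ι) : signFlip η x i = η i • x i := rfl

lemma signFlip_stdBasis [DecidableEq ι] (η : ι → ℤˣ) (i : ι) :
    signFlip η (stdBasis i) = η i • stdBasis i := by
  ext j
  rcases eq_or_ne j i with rfl | h <;> simp [_root_.stdBasis, *]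

end SignFlip

section LatticeGraph

variable {ι : Type*} [Fintype ι] [DecidableEq ι]

lemma det_smul_mem_colSpan (M : Matrix ι ι ℤ) (x : ι → ℤ) : M.det • x ∈ colSpan M :=
  ⟨M.adjugate *ᵥ x, by simp [mulVec_mulVec, mul_adjugate]⟩

lemma det_ne_zero_of_smul_mem_colSpan {M : Matrix ι ι ℤ} {D : ℤ} (hD : D ≠ 0)
    (h : ∀ x, D • x ∈ colSpan M) : M.det ≠ 0 := by
  intro hdet
  obtain ⟨y, hy, hyM⟩ := exists_vecMul_eq_zero_iff.mpr hdet
  obtain ⟨c, hc⟩ := h y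
  have hDy : D * (y ⬝ᵥ y) = 0 := by
    rw [← smul_eq_mul, ← dotProduct_smul, ← hc, mulVecLin_apply, dotProduct_mulVec, hyM,
      zero_dotProduct]
  simp_all [dotProduct_self_eq_zero]

lemma latticeGraph_adj_iff {M : Matrix ι ι ℤ} {v w : LatticeVertex M} :
    (latticeGraph M).Adj v w ↔
      v ≠ w ∧ ∃ (i : ι) (u : ℤˣ), v - w = u • Submodule.Quotient.mk (stdBasis i) := by
  refine and_congr_right fun _ => exists_congr fun i => ⟨?_, ?_⟩
  · rintro (h | h)
    · exact ⟨1, by simpa using h⟩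
    · exact ⟨-1, by simp [← h]⟩
  · rintro ⟨u, h⟩
    rcases Int.units_eq_one_or u with rfl | rfl
    · exact Or.inl (by simpa using h)
    · exact Or.inr (by simp [← neg_sub v w, h])

variable {M M' : Matrix ι ι ℤ}

lemma latticeGraph_adj_quotientEquiv (f : (ι → ℤ) ≃ₗ[ℤ] (ι → ℤ))
    (hf : ∀ i, ∃ (j : ι) (u : ℤˣ), f (stdBasis i) = u • stdBasis j)
    (h : (colSpan M).map (f : (ι → ℤ) →ₗ[ℤ] (ι → ℤ)) = colSpan M') {v w : LatticeVertex M}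
    (hvw : (latticeGraph M).Adj v w) :
    (latticeGraph M').Adj (Submodule.Quotient.equiv _ _ f h v)
      (Submodule.Quotient.equiv _ _ f h w) := by
  obtain ⟨hne, i, u, hu⟩ := latticeGraph_adj_iff.mp hvw
  obtain ⟨j, u', hu'⟩ := hf i
  refine latticeGraph_adj_iff.mpr
    ⟨(Submodule.Quotient.equiv _ _ f h).injective.ne hne, j, u * u', ?_⟩
  rw [← map_sub, hu, Units.smul_def, map_zsmul, ← Units.smul_def]
  simp [hu', mul_smul]

def latticeGraphIsoOfMapEq (f : (ι → ℤ) ≃ₗ[ℤ] (ι → ℤ))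
    (hf : ∀ i, ∃ (j : ι) (u : ℤˣ), f (stdBasis i) = u • stdBasis j)
    (hf' : ∀ i, ∃ (j : ι) (u : ℤˣ), f.symm (stdBasis i) = u • stdBasis j)
    (h : (colSpan M).map (f : (ι → ℤ) →ₗ[ℤ] (ι → ℤ)) = colSpan M') :
    latticeGraph M ≃g latticeGraph M' where
  toEquiv := (Submodule.Quotient.equiv _ _ f h).toEquiv
  map_rel_iff' {v w} := by
    refine ⟨fun hvw => ?_, latticeGraph_adj_quotientEquiv f hf h⟩
    have := latticeGraph_adj_quotientEquiv f.symm hf' ((Submodule.map_symm_eq_iff f).mpr h) hvw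
    rwa [← Submodule.Quotient.equiv_symm _ _ f h, LinearEquiv.coe_toEquiv,
      LinearEquiv.symm_apply_apply, LinearEquiv.symm_apply_apply] at this

def latticeGraphIsoOfMapSignFlip (η : ι → ℤˣ)
    (h : (colSpan M).map (signFlip η : (ι → ℤ) →ₗ[ℤ] (ι → ℤ)) = colSpan M') :
    latticeGraph M ≃g latticeGraph M' :=
  latticeGraphIsoOfMapEq (signFlip η) (fun i => ⟨i, η i, signFlip_stdBasis η i⟩)
    (fun i => ⟨i, (η i)⁻¹, signFlip_stdBasis η⁻¹ i⟩) h

end LatticeGraph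

section SignedPerm

variable {ι : Type*} [Fintype ι] [DecidableEq ι]

def IsSignedPermSymmetry (L : Submodule ℤ (ι → ℤ)) (σ : Equiv.Perm ι) : Prop :=
  ∃ (P : Matrix ι ι ℤ) (ε : ι → ℤˣ), (∀ x ∈ L, P *ᵥ x ∈ L) ∧
    ∀ j, P *ᵥ stdBasis j = ε j • stdBasis (σ j)

lemma IsSignedPermSymmetry.mul {L : Submodule ℤ (ι → ℤ)} {σ τ : Equiv.Perm ι}
    (hσ : IsSignedPermSymmetry L σ) (hτ : IsSignedPermSymmetry L τ) :
    IsSignedPermSymmetry L (σ * τ) := by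
  obtain ⟨P, ε, hPL, hP⟩ := hσ
  obtain ⟨Q, δ, hQL, hQ⟩ := hτ
  refine ⟨P * Q, fun j => ε (τ j) * δ j, fun x hx => ?_, fun j => ?_⟩
  · rw [← mulVec_mulVec]; exact hPL _ (hQL x hx)
  · rw [← mulVec_mulVec, hQ, Units.smul_def, mulVec_smul, hP, ← Units.smul_def, smul_smul,
      mul_comm]
    rfl

lemma mulVec_apply_of_mulVec_stdBasis_eq {P : Matrix ι ι ℤ} {σ : Equiv.Perm ι} {ε : ι → ℤˣ}
    (hP : ∀ j, P *ᵥ stdBasis j = ε j • stdBasis (σ j)) (x : ι → ℤ) (j : ι) :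
    (P *ᵥ x) (σ j) = ε j • x j := by
  have hent : ∀ k, P (σ j) k = if k = j then (ε j : ℤ) else 0 := fun k => by
    have := congrFun (hP k) (σ j)
    by_cases hk : k = j
    · subst hk; simpa [_root_.stdBasis, Units.smul_def] using this
    · simpa [_root_.stdBasis, Units.smul_def, hk, Ne.symm hk] using this
  simp [mulVec, dotProduct, hent, Units.smul_def]

lemma mulVec_mem_colSpan_of_mul_eq {M P Q : Matrix ι ι ℤ} (h : P * M = M * Q) {x : ι → ℤ}
    (hx : x ∈ colSpan M) : P *ᵥ x ∈ colSpan M := by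
  obtain ⟨c, rfl⟩ := hx
  exact ⟨Q *ᵥ c, by simp [mulVec_mulVec, h]⟩

lemma IsSignedPerm.exists_perm_s2 {n : ℕ} {P : Matrix (Fin n) (Fin n) ℤ} (hP : IsSignedPerm P) :
    ∃ (σ : Equiv.Perm (Fin n)) (ε : Fin n → ℤˣ), ∀ j, P *ᵥ stdBasis j = ε j • stdBasis (σ j) := by
  obtain ⟨hval, hrow, hcol⟩ := hP
  choose τ hτ hτ_unique using hcol
  have hinj : Function.Injective τ := fun j j' h => (hrow (τ j)).unique (hτ j) (h ▸ hτ j')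
  have hunit : ∀ j, IsUnit (P (τ j) j) := fun j =>
    Int.isUnit_iff.mpr ((hval _ _).resolve_left (hτ j))
  refine ⟨Equiv.ofBijective τ hinj.bijective_of_finite, fun j => (hunit j).unit, fun j => ?_⟩
  ext i
  by_cases hi : i = τ j
  · subst hi; simp [_root_.stdBasis]
  · have : P i j = 0 := by_contra fun h => hi (hτ_unique j i h)
    simp [_root_.stdBasis, hi, this]

lemma IsLinearlySymmetric.exists_isSignedPermSymmetry {n : ℕ} {M : Matrix (Fin n) (Fin n) ℤ}
    (hM : IsLinearlySymmetric M) (i : Fin n) :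
    ∃ σ : Equiv.Perm (Fin n), σ ⟨0, i.pos⟩ = i ∧ IsSignedPermSymmetry (colSpan M) σ := by
  obtain ⟨P, hP, ⟨Q, hPQ⟩, h0⟩ := hM i
  obtain ⟨σ, ε, hσ⟩ := hP.exists_perm_s2
  refine ⟨σ, by_contra fun hne => ?_, P, ε, fun x => mulVec_mem_colSpan_of_mul_eq hPQ, hσ⟩
  rcases h0 with h0 | h0 <;>
    simpa [_root_.stdBasis, Ne.symm hne, Units.smul_def] using
      congrFun ((hσ _).symm.trans h0) (σ ⟨0, i.pos⟩)

lemma perm_fin_three_eq_finRotate (σ τ : Equiv.Perm (Fin 3)) (hσ : σ 0 = 1) (hτ : τ 0 = 2) :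
    σ = finRotate 3 ∨ τ * τ = finRotate 3 ∨ σ * τ * (σ * τ) = finRotate 3 := by
  revert σ τ; decide

lemma IsLinearlySymmetric.isSignedPermSymmetry_finRotate {M : Matrix (Fin 3) (Fin 3) ℤ}
    (hM : IsLinearlySymmetric M) : IsSignedPermSymmetry (colSpan M) (finRotate 3) := by
  obtain ⟨σ, hσ0, hσ⟩ := hM.exists_isSignedPermSymmetry 1
  obtain ⟨τ, hτ0, hτ⟩ := hM.exists_isSignedPermSymmetry 2
  rcases perm_fin_three_eq_finRotate σ τ hσ0 hτ0 with h | h | h <;> rw [← h]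
  · exact hσ
  · exact hτ.mul hτ
  · exact (hσ.mul hτ).mul (hσ.mul hτ)

end SignedPerm

section CyclicShift

def cyclicShift : (Fin 3 → ℤ) →ₗ[ℤ] (Fin 3 → ℤ) := LinearMap.funLeft ℤ ℤ (finRotate 3).symm

@[simp]
lemma cyclicShift_apply (x : Fin 3 → ℤ) : cyclicShift x = ![x 2, x 0, x 1] := by
  ext i; fin_cases i <;> rfl

/-- For the symmetry `P` with signs `ε`, the chosen `η` makes `signFlip η ∘ P ∘ signFlip η` equal
to `ε 0 * ε 1 * ε 2` times the cyclic shift. -/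
lemma IsSignedPermSymmetry.exists_signFlip {L : Submodule ℤ (Fin 3 → ℤ)}
    (h : IsSignedPermSymmetry L (finRotate 3)) :
    ∃ η : Fin 3 → ℤˣ, ∀ x ∈ L.map (signFlip η : (Fin 3 → ℤ) →ₗ[ℤ] (Fin 3 → ℤ)),
      cyclicShift x ∈ L.map (signFlip η : (Fin 3 → ℤ) →ₗ[ℤ] (Fin 3 → ℤ)) := by
  obtain ⟨P, ε, hPL, hP⟩ := h
  set s := ε 0 * ε 1 * ε 2
  refine ⟨![1, s * ε 0, ε 0 * ε 1], ?_⟩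
  rintro _ ⟨x, hx, rfl⟩
  refine ⟨(s : ℤ) • P *ᵥ x, L.smul_mem _ (hPL x hx), ?_⟩
  have h0 := mulVec_apply_of_mulVec_stdBasis_eq hP x 0
  have h1 := mulVec_apply_of_mulVec_stdBasis_eq hP x 1
  have h2 := mulVec_apply_of_mulVec_stdBasis_eq hP x 2
  simp only [finRotate_apply, zero_add, Fin.reduceAdd] at h0 h1 h2
  ext i
  rcases Int.units_eq_one_or (ε 0) with e0 | e0 <;>
  rcases Int.units_eq_one_or (ε 1) with e1 | e1 <;>
  rcases Int.units_eq_one_or (ε 2) with e2 | e2 <;>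
  fin_cases i <;> simp [s, h0, h1, h2, e0, e1, e2]

def coordSum : (Fin 3 → ℤ) →ₗ[ℤ] ℤ := ∑ i, LinearMap.proj i

@[simp]
lemma coordSum_apply (x : Fin 3 → ℤ) : coordSum x = x 0 + x 1 + x 2 := by
  simp [coordSum, Fin.sum_univ_three]

lemma coordSum_cyclicShift (x : Fin 3 → ℤ) : coordSum (cyclicShift x) = coordSum x := by
  simp only [cyclicShift_apply, coordSum_apply, cons_val_zero, cons_val_one, cons_val]
  ring

lemma cyclicShift_cyclicShift_of_coordSum_eq_zero {w : Fin 3 → ℤ} (hw : coordSum w = 0) :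
    cyclicShift (cyclicShift w) = -w - cyclicShift w := by
  simp only [coordSum_apply] at hw
  ext i; fin_cases i <;> simp <;> omega

lemma eq_const_of_cyclicShift_eq {v : Fin 3 → ℤ} (h : cyclicShift v = v) :
    v = ![v 0, v 0, v 0] := by
  have h0 := congrFun h 0
  have h1 := congrFun h 1
  simp only [cyclicShift_apply, cons_val_zero, cons_val_one] at h0 h1
  ext i; fin_cases i <;> simp <;> omega

end CyclicShift

section Eisenstein

/-- `eisensteinNorm a b` is the norm of `a + bω` in `ℤ[ω]`, where `ω² + ω + 1 = 0`. -/
def eisensteinNorm (a b : ℤ) : ℤ := a ^ 2 - a * b + b ^ 2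

lemma exists_abs_two_mul_sub_mul_le (A D : ℤ) (hD : 0 < D) : ∃ k, |2 * (A - k * D)| ≤ D := by
  have hdiv := Int.emod_add_mul_ediv A D
  have hlo := Int.emod_nonneg A hD.ne'
  have hhi := Int.emod_lt_of_pos A hD
  by_cases h : 2 * (A % D) ≤ D
  · exact ⟨A / D, abs_le.mpr ⟨by nlinarith, by nlinarith⟩⟩
  · exact ⟨A / D + 1, abs_le.mpr ⟨by nlinarith, by nlinarith⟩⟩

/-- Division with remainder in `ℤ[ω]`: the remainder is `(a + bω) - (k + lω)(c + dω)`. -/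
lemma exists_eisensteinNorm_sub_lt (a b c d : ℤ) (h : 0 < eisensteinNorm c d) :
    ∃ k l, eisensteinNorm (a - (k * c - l * d)) (b - (k * d + l * (c - d))) <
      eisensteinNorm c d := by
  set D := eisensteinNorm c d
  -- `(a + bω)(c + dω²) = A₀ + B₀ω`, and `k`, `l` round `A₀ / D`, `B₀ / D`; the remainder times
  -- `c + dω²` is then `A + Bω`, whence `hmul` by multiplicativity of the norm.
  obtain ⟨k, hk⟩ := exists_abs_two_mul_sub_mul_le (a * c - a * d + b * d) D h
  obtain ⟨l, hl⟩ := exists_abs_two_mul_sub_mul_le (b * c - a * d) D h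
  rw [abs_le] at hk hl
  refine ⟨k, l, ?_⟩
  set A := a * c - a * d + b * d - k * D
  set B := b * c - a * d - l * D
  have hmul : D * eisensteinNorm (a - (k * c - l * d)) (b - (k * d + l * (c - d))) =
      eisensteinNorm A B := by
    simp only [A, B, D, eisensteinNorm]; ring
  have hAB : 4 * eisensteinNorm A B ≤ 3 * D ^ 2 := by
    unfold eisensteinNorm; nlinarith
  nlinarith

/-- A vector `x` with `coordSum x = 0` stands for `x 0 - x 2 ω`, and `cyclicShift` acts on such
vectors as multiplication by `ω`. -/
lemma dotProduct_self_eq_of_coordSum_eq_zero {x : Fin 3 → ℤ} (hx : coordSum x = 0) :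
    x ⬝ᵥ x = 2 * eisensteinNorm (x 0) (-x 2) := by
  simp only [coordSum_apply] at hx
  simp [dotProduct, Fin.sum_univ_three, eisensteinNorm, show x 1 = -x 0 - x 2 by omega]
  ring

lemma exists_dotProduct_self_sub_lt {w x : Fin 3 → ℤ} (hw : coordSum w = 0) (hx : coordSum x = 0)
    (hw0 : w ≠ 0) : ∃ k l : ℤ,
      (x - k • w - l • cyclicShift w) ⬝ᵥ (x - k • w - l • cyclicShift w) < w ⬝ᵥ w := by
  have hpos : 0 < eisensteinNorm (w 0) (-w 2) := by
    have := dotProduct_self_eq_of_coordSum_eq_zero hw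
    have := dotProduct_self_eq_zero.not.mpr hw0
    have := dotProduct_star_self_nonneg w
    simp only [star_trivial] at *
    omega
  obtain ⟨k, l, hkl⟩ := exists_eisensteinNorm_sub_lt (x 0) (-x 2) (w 0) (-w 2) hpos
  refine ⟨k, l, ?_⟩
  rw [dotProduct_self_eq_of_coordSum_eq_zero hw, dotProduct_self_eq_of_coordSum_eq_zero
    (by simp only [map_sub, map_smul, coordSum_cyclicShift, hw, hx, smul_zero, sub_zero])]
  simp only [coordSum_apply] at hw
  have h0 : (x - k • w - l • cyclicShift w) 0 = x 0 - (k * w 0 - l * -w 2) := by simp; ring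
  have h2 : -(x - k • w - l • cyclicShift w) 2 = -x 2 - (k * -w 2 + l * (w 0 - -w 2)) := by
    simp; linear_combination l * hw
  rw [h0, h2]
  linarith

end Eisenstein

section Span

open Submodule

variable {R M : Type*}

lemma span_insert_insert_le [Semiring R] [AddCommMonoid M] [Module R M] {x y z : M}
    {S : Submodule R M} (hx : x ∈ S) (hy : y ∈ S) (hz : z ∈ S) : span R {x, y, z} ≤ S :=
  span_le.mpr (by simp [Set.insert_subset_iff, hx, hy, hz])

lemma span_insert_insert_neg_sub_le [Ring R] [AddCommGroup M] [Module R M] (x y z : M) :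
    span R {x, y, -y - z} ≤ span R {x, y, z} :=
  span_insert_insert_le (subset_span (by simp)) (subset_span (by simp))
    (sub_mem (neg_mem (subset_span (by simp))) (subset_span (by simp)))

lemma span_insert_insert_neg_sub [Ring R] [AddCommGroup M] [Module R M] (x y z : M) :
    span R {x, y, -y - z} = span R {x, y, z} := by
  refine le_antisymm (span_insert_insert_neg_sub_le x y z) ?_
  simpa using span_insert_insert_neg_sub_le x y (-y - z)

lemma smul_mem_map_of_forall_smul_mem [CommSemiring R] [AddCommMonoid M] [Module R M]
    {S : Submodule R M} (f : M ≃ₗ[R] M) {D : R} (h : ∀ x, D • x ∈ S) (y : M) :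
    D • y ∈ S.map (f : M →ₗ[R] M) :=
  ⟨D • f.symm y, h _, by simp⟩

end Span

section CyclicLattice

open Submodule

lemma exists_coordSum_dvd (L : Submodule ℤ (Fin 3 → ℤ)) :
    ∃ v ∈ L, ∀ x ∈ L, coordSum v ∣ coordSum x := by
  obtain ⟨v, hv, hgen⟩ := mem_map.mp (IsPrincipal.generator_mem (L.map coordSum))
  exact ⟨v, hv, fun x hx =>
    hgen ▸ (IsPrincipal.mem_iff_generator_dvd _).mp (mem_map_of_mem hx)⟩

variable {L : Submodule ℤ (Fin 3 → ℤ)}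

lemma exists_generator_of_coordSum_eq_zero (hL : ∀ x ∈ L, cyclicShift x ∈ L) {D : ℤ} (hD : D ≠ 0)
    (hDL : ∀ x, D • x ∈ L) : ∃ w ∈ L, coordSum w = 0 ∧
      ∀ x ∈ L, coordSum x = 0 → ∃ k l : ℤ, x = k • w + l • cyclicShift w := by
  obtain ⟨_, ⟨w, hwL, hw0, hwne, rfl⟩, hmin⟩ := Int.exists_least_of_bdd
    (P := fun n => ∃ w ∈ L, coordSum w = 0 ∧ w ≠ 0 ∧ w ⬝ᵥ w = n)
    ⟨0, fun _ ⟨w, _, _, _, h⟩ => h ▸ by simpa using dotProduct_star_self_nonneg w⟩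
    ⟨_, D • ![1, -1, 0], hDL _, by simp, by simpa using hD, rfl⟩
  refine ⟨w, hwL, hw0, fun x hx hx0 => ?_⟩
  obtain ⟨k, l, hlt⟩ := exists_dotProduct_self_sub_lt hw0 hx0 hwne
  refine ⟨k, l, ?_⟩
  by_contra hne
  have hr : x - k • w - l • cyclicShift w ∈ L :=
    sub_mem (sub_mem hx (L.smul_mem k hwL)) (L.smul_mem l (hL w hwL))
  have := hmin _ ⟨_, hr, by simp only [map_sub, map_smul, coordSum_cyclicShift, hw0, hx0,
    smul_zero, sub_zero], by rwa [sub_sub, sub_ne_zero], rfl⟩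
  omega

lemma span_eq_of_coordSum_dvd (hL : ∀ x ∈ L, cyclicShift x ∈ L) {v w : Fin 3 → ℤ}
    (hv : v ∈ L) (hw : w ∈ L) (hdvd : ∀ x ∈ L, coordSum v ∣ coordSum x)
    (hgen : ∀ x ∈ L, coordSum x = 0 → ∃ k l : ℤ, x = k • w + l • cyclicShift w) :
    span ℤ {v, w, cyclicShift w} = L := by
  refine le_antisymm (span_insert_insert_le hv hw (hL w hw)) fun x hx => ?_
  set m := coordSum x / coordSum v
  obtain ⟨k, l, hkl⟩ := hgen (x - m • v) (sub_mem hx (L.smul_mem m hv))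
    (by rw [map_sub, map_smul, smul_eq_mul, Int.ediv_mul_cancel (hdvd x hx), sub_self])
  rw [← sub_add_cancel x (m • v), hkl]
  refine add_mem (add_mem (smul_mem _ _ ?_) (smul_mem _ _ ?_)) (smul_mem _ _ ?_) <;>
    exact subset_span (by simp)

/-- Adding `α • w + β • cyclicShift w` to `u` changes `(p, q)` by `(-α - β, α - 2β)`, so it
changes `p + q` by `-3β`. -/
lemma exists_cyclicShift_sub_eq_smul {u w : Fin 3 → ℤ} (hw : coordSum w = 0) {p q : ℤ}
    (h : cyclicShift u - u = p • w + q • cyclicShift w) :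
    ∃ α β r : ℤ, (r = 0 ∨ r = 1 ∨ r = -1) ∧
      cyclicShift (u + α • w + β • cyclicShift w) - (u + α • w + β • cyclicShift w) = r • w := by
  set β := (p + q + 1) / 3
  refine ⟨p - β - (p + q - 3 * β), β, p + q - 3 * β, by omega, ?_⟩
  rw [map_add, map_add, map_smul, map_smul, cyclicShift_cyclicShift_of_coordSum_eq_zero hw,
    eq_add_of_sub_eq h]
  module

lemma colSpan_fin_three (M : Matrix (Fin 3) (Fin 3) ℤ) :
    colSpan M = span ℤ {M.col 0, M.col 1, M.col 2} := by
  rw [colSpan, range_mulVecLin]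
  congr 1
  ext x
  simp [Fin.exists_fin_succ, eq_comm]

lemma colSpan_circulant (v : Fin 3 → ℤ) :
    colSpan !![v 0, v 2, v 1; v 1, v 0, v 2; v 2, v 1, v 0] =
      span ℤ {v, cyclicShift v, cyclicShift (cyclicShift v)} := by
  have h1 : !![v 0, v 2, v 1; v 1, v 0, v 2; v 2, v 1, v 0].col 1 = cyclicShift v := by
    ext i; fin_cases i <;> rfl
  have h2 : !![v 0, v 2, v 1; v 1, v 0, v 2; v 2, v 1, v 0].col 2 =
      cyclicShift (cyclicShift v) := by
    ext i; fin_cases i <;> rfl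
  rw [colSpan_fin_three, h1, h2]
  congr
  ext i; fin_cases i <;> rfl

lemma colSpan_eq_span_const_of_coordSum_eq_zero (a : ℤ) {w : Fin 3 → ℤ} (hw : coordSum w = 0) :
    colSpan !![a, w 0, w 1; a, w 1, -w 0 - w 1; a, -w 0 - w 1, w 0] =
      span ℤ {![a, a, a], w, cyclicShift (cyclicShift w)} := by
  simp only [coordSum_apply] at hw
  have h1 : !![a, w 0, w 1; a, w 1, -w 0 - w 1; a, -w 0 - w 1, w 0].col 1 = w := by
    ext i; fin_cases i <;> simp; omega
  have h2 : !![a, w 0, w 1; a, w 1, -w 0 - w 1; a, -w 0 - w 1, w 0].col 2 =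
      cyclicShift (cyclicShift w) := by
    ext i; fin_cases i <;> simp; omega
  rw [colSpan_fin_three, h1, h2]
  congr
  ext i; fin_cases i <;> rfl

lemma span_orbit_eq {v w : Fin 3 → ℤ} {r : ℤ} (hr : r * r = 1)
    (h : cyclicShift v - v = r • w) :
    span ℤ {v, cyclicShift v, cyclicShift (cyclicShift v)} = span ℤ {v, w, cyclicShift w} := by
  have hcv : cyclicShift v = v + r • w := eq_add_of_sub_eq' h
  have hccv : cyclicShift (cyclicShift v) = v + r • w + r • cyclicShift w := by
    rw [hcv, map_add, map_smul, hcv]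
  have hw : w = r • (cyclicShift v - v) := by rw [h, smul_smul, hr, one_smul]
  have hcw : cyclicShift w = r • (cyclicShift (cyclicShift v) - cyclicShift v) := by
    rw [hw, map_smul, map_sub]
  refine le_antisymm (span_insert_insert_le ?_ ?_ ?_) (span_insert_insert_le ?_ ?_ ?_)
  · exact subset_span (by simp)
  · rw [hcv]
    exact add_mem (subset_span (by simp)) (smul_mem _ _ (subset_span (by simp)))
  · rw [hccv]
    exact add_mem (add_mem (subset_span (by simp)) (smul_mem _ _ (subset_span (by simp))))
      (smul_mem _ _ (subset_span (by simp)))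
  · exact subset_span (by simp)
  · rw [hw]
    exact smul_mem _ _ (sub_mem (subset_span (by simp)) (subset_span (by simp)))
  · rw [hcw]
    exact smul_mem _ _ (sub_mem (subset_span (by simp)) (subset_span (by simp)))

theorem exists_colSpan_eq_of_cyclicShift_mem (L : Submodule ℤ (Fin 3 → ℤ))
    (hL : ∀ x ∈ L, cyclicShift x ∈ L) {D : ℤ} (hD : D ≠ 0) (hDL : ∀ x, D • x ∈ L) :
    ∃ (a b c : ℤ) (M : Matrix (Fin 3) (Fin 3) ℤ),
      (M = !![a, c, b; b, a, c; c, b, a] ∨ M = !![a, b, c; a, c, -b - c; a, -b - c, b]) ∧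
      colSpan M = L := by
  obtain ⟨w, hwL, hw0, hgen⟩ := exists_generator_of_coordSum_eq_zero hL hD hDL
  obtain ⟨u, huL, hudvd⟩ := exists_coordSum_dvd L
  obtain ⟨p, q, hpq⟩ := hgen _ (sub_mem (hL u huL) huL)
    (by rw [map_sub, coordSum_cyclicShift, sub_self])
  obtain ⟨α, β, r, hr, hv⟩ := exists_cyclicShift_sub_eq_smul hw0 hpq
  set v := u + α • w + β • cyclicShift w
  have hvL : v ∈ L := add_mem (add_mem huL (L.smul_mem α hwL)) (L.smul_mem β (hL w hwL))
  have hvsum : coordSum v = coordSum u := by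
    simp only [v, map_add, map_smul, coordSum_cyclicShift, hw0, smul_zero, add_zero]
  have hspan : span ℤ {v, w, cyclicShift w} = L :=
    span_eq_of_coordSum_dvd hL hvL hwL (hvsum ▸ hudvd) hgen
  rcases hr with rfl | hr
  · refine ⟨v 0, w 0, w 1, _, Or.inr rfl, ?_⟩
    have hvconst := eq_const_of_cyclicShift_eq (by rwa [zero_smul, sub_eq_zero] at hv)
    rw [colSpan_eq_span_const_of_coordSum_eq_zero _ hw0, ← hvconst,
      cyclicShift_cyclicShift_of_coordSum_eq_zero hw0, span_insert_insert_neg_sub, hspan]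
  · refine ⟨v 0, v 1, v 2, _, Or.inl rfl, ?_⟩
    rw [colSpan_circulant, span_orbit_eq (by rcases hr with rfl | rfl <;> rfl) hv, hspan]

end CyclicLattice

/-- every linearly symmetric 3-dimensional lattice graph is isomorphic to the
lattice graph of a nonsingular matrix of one of the two given shapes. -/
theorem linearlySymmetric_3D_characterization
    (M : Matrix (Fin 3) (Fin 3) ℤ) (hM : M.det ≠ 0) (hsym : IsLinearlySymmetric M) :
    ∃ (a b c : ℤ) (M' : Matrix (Fin 3) (Fin 3) ℤ),
      (M' = !![a, c, b; b, a, c; c, b, a] ∨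
        M' = !![a, b, c; a, c, -b - c; a, -b - c, b]) ∧
      M'.det ≠ 0 ∧ Nonempty (latticeGraph M ≃g latticeGraph M') := by
  obtain ⟨η, hη⟩ := hsym.isSignedPermSymmetry_finRotate.exists_signFlip
  have hdet := smul_mem_map_of_forall_smul_mem (signFlip η) (det_smul_mem_colSpan M)
  obtain ⟨a, b, c, M', hshape, hM'⟩ := exists_colSpan_eq_of_cyclicShift_mem _ hη hM hdet
  exact ⟨a, b, c, M', hshape, det_ne_zero_of_smul_mem_colSpan hM (hM' ▸ hdet),
    ⟨latticeGraphIsoOfMapSignFlip η hM'.symm⟩⟩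
end

section
/- For every positive integer a, the projection over e₃ of the face-centered cubic lattice graph FCC(a) is isomorphic to the rectangular twisted torus RTT(a). -/
open Matrix

/-!
The map `ℤ² → ℤ³/FCC(a)ℤ³`, `x ↦ (x₀, x₁, 0)`, has image the subgroup generated by `e₁, e₂`,
and its kernel is `RTT(a)ℤ²`: if `(x₀, x₁, 0) = FCC(a) c` then the last coordinate gives
`a c₂ = -a c₁`, so `(x₀, x₁) = RTT(a) (c₁, c₀ - c₁)`. The induced group isomorphism
`ℤ²/RTT(a)ℤ² ≅ ⟨e₁, e₂⟩` sends each `e_k` to `e_k`, hence is an isomorphism of the graphs.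
-/

namespace LatticeGraph

/-- The vertex set of `spannedSubgraph M S`. -/
abbrev spannedSubgroup {ι : Type*} [Fintype ι] [DecidableEq ι] (M : Matrix ι ι ℤ) (S : Set ι) :
    AddSubgroup (LatticeVertex M) :=
  AddSubgroup.closure ((fun i => (Submodule.Quotient.mk (stdBasis i) : LatticeVertex M)) '' S)

variable {ι κ : Type*} [Fintype ι] [DecidableEq ι] [Fintype κ] [DecidableEq κ]
  {M : Matrix ι ι ℤ} {N : Matrix κ κ ℤ} {L : (κ → ℤ) →ₗ[ℤ] (ι → ℤ)} {f : κ → ι}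

lemma range_mkQ_comp_eq_spannedSubgroup (hL : ∀ k, L (stdBasis k) = stdBasis (f k)) :
    (LinearMap.range ((colSpan M).mkQ ∘ₗ L)).toAddSubgroup = spannedSubgroup M (Set.range f) := by
  rw [LinearMap.range_eq_map, ← (Pi.basisFun ℤ κ).span_eq, Submodule.map_span,
    Submodule.span_int_eq_addSubgroupClosure, ← Set.range_comp, spannedSubgroup, ← Set.range_comp]
  congr 2
  funext k
  simp only [Function.comp_apply, Pi.basisFun_apply]
  exact congrArg Submodule.Quotient.mk (hL k)

noncomputable def quotEquivSpannedSubgroup (hL : ∀ k, L (stdBasis k) = stdBasis (f k))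
    (hker : (colSpan M).comap L = colSpan N) :
    LatticeVertex N ≃+ spannedSubgroup M (Set.range f) :=
  ((Submodule.quotEquivOfEq _ _ (by rw [LinearMap.ker_comp, Submodule.ker_mkQ, hker])).trans
    ((colSpan M).mkQ ∘ₗ L).quotKerEquivRange).toAddEquiv.trans
    (AddEquiv.addSubgroupCongr (range_mkQ_comp_eq_spannedSubgroup hL))

variable (hL : ∀ k, L (stdBasis k) = stdBasis (f k)) (hker : (colSpan M).comap L = colSpan N)

lemma coe_quotEquivSpannedSubgroup_mk (x : κ → ℤ) :
    (quotEquivSpannedSubgroup hL hker (Submodule.Quotient.mk x) : LatticeVertex M) =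
      Submodule.Quotient.mk (L x) :=
  rfl

lemma coe_quotEquivSpannedSubgroup_eq_stdBasis_iff (u : LatticeVertex N) (k : κ) :
    (quotEquivSpannedSubgroup hL hker u : LatticeVertex M) =
        Submodule.Quotient.mk (stdBasis (f k)) ↔
      u = Submodule.Quotient.mk (stdBasis k) := by
  rw [← hL, ← coe_quotEquivSpannedSubgroup_mk hL hker, Subtype.coe_inj, EquivLike.apply_eq_iff_eq]

noncomputable def latticeGraphIsoSpannedSubgraph :
    latticeGraph N ≃g spannedSubgraph M (Set.range f) where
  toEquiv := (quotEquivSpannedSubgroup hL hker).toEquiv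
  map_rel_iff' {v w} := by
    simp only [spannedSubgraph, latticeGraph, Set.exists_range_iff, AddEquiv.toEquiv_eq_coe,
      EquivLike.coe_coe, ne_eq, EmbeddingLike.apply_eq_iff_eq, ← AddSubgroup.coe_sub, ← map_sub,
      coe_quotEquivSpannedSubgroup_eq_stdBasis_iff]

end LatticeGraph

def planeInclusion : (Fin 2 → ℤ) →ₗ[ℤ] (Fin 3 → ℤ) where
  toFun x := ![x 0, x 1, 0]
  map_add' x y := by funext j; fin_cases j <;> simp
  map_smul' c x := by funext j; fin_cases j <;> simp

lemma planeInclusion_stdBasis (k : Fin 2) :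
    planeInclusion (stdBasis k) = stdBasis (![0, 1] k : Fin 3) := by
  funext j; fin_cases k <;> fin_cases j <;> rfl

lemma range_fin_two_eq_ne_two : Set.range (![0, 1] : Fin 2 → Fin 3) = {i | i ≠ 2} := by
  ext i; fin_cases i <;> simp

lemma fcc_mulVec (a : ℤ) (c : Fin 3 → ℤ) :
    !![a, a, 0; a, 0, a; 0, a, a] *ᵥ c =
      ![a * c 0 + a * c 1, a * c 0 + a * c 2, a * c 1 + a * c 2] := by
  ext i; fin_cases i <;> simp [mulVec, dotProduct, Fin.sum_univ_three]

lemma rtt_mulVec (a : ℤ) (d : Fin 2 → ℤ) :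
    !![2 * a, a; 0, a] *ᵥ d = ![2 * a * d 0 + a * d 1, a * d 1] := by
  ext i; fin_cases i <;> simp [mulVec, dotProduct]

lemma comap_planeInclusion_colSpan_fcc (a : ℤ) :
    (colSpan !![a, a, 0; a, 0, a; 0, a, a]).comap planeInclusion = colSpan !![2 * a, a; 0, a] := by
  ext x
  simp only [Submodule.mem_comap, colSpan, LinearMap.mem_range, mulVecLin_apply, fcc_mulVec,
    rtt_mulVec]
  constructor
  · rintro ⟨c, hc⟩
    have h0 : a * c 0 + a * c 1 = x 0 := congrFun hc 0
    have h1 : a * c 0 + a * c 2 = x 1 := congrFun hc 1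
    have h2 : a * c 1 + a * c 2 = 0 := congrFun hc 2
    refine ⟨![c 1, c 0 - c 1], funext fun j => ?_⟩
    fin_cases j
    · show 2 * a * c 1 + a * (c 0 - c 1) = x 0
      linear_combination h0
    · show a * (c 0 - c 1) = x 1
      linear_combination h1 - h2
  · rintro ⟨d, rfl⟩
    refine ⟨![d 0 + d 1, d 0, -d 0], funext fun j => ?_⟩
    fin_cases j <;> simp [planeInclusion] <;> ring

theorem projection_FCC_iso_RTT_general (a : ℕ) :
    Nonempty (projGraph !![(a : ℤ), a, 0; a, 0, a; 0, a, a] (2 : Fin 3) ≃g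
      latticeGraph !![(2 * a : ℤ), a; 0, a]) := by
  have iso := LatticeGraph.latticeGraphIsoSpannedSubgraph planeInclusion_stdBasis
    (comap_planeInclusion_colSpan_fcc a)
  rw [range_fin_two_eq_ne_two] at iso
  exact ⟨iso.symm⟩

/-- the projection over `e₃` of `FCC(a)` is isomorphic to the rectangular
twisted torus `RTT(a)`. -/
theorem projection_FCC_iso_RTT (a : ℕ) (ha : 0 < a) :
    Nonempty (projGraph !![(a : ℤ), a, 0; a, 0, a; 0, a, a] (2 : Fin 3) ≃g
      latticeGraph !![(2 * a : ℤ), a; 0, a]) :=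
  projection_FCC_iso_RTT_general a
end

section
/- For every positive integer a and every j ∈ {1,2,3}, the projection over e_j of the face-centered cubic lattice graph FCC(a) is isomorphic to the rectangular twisted torus RTT(a); in particular all three projections of FCC(a) are pairwise isomorphic (FCC(a) is the prismatic doubly twisted torus of side a). -/
open Matrix

/-! The columns of `FCC(a)` span `a • D₃` and those of `RTT(a)` span `a • D₂`, where `Dₙ` is the
checkerboard lattice of integer vectors with even coordinate sum. Padding with a zero at
position `j` preserves the coordinate sum, so it maps `a • D₂` onto `(a • D₃) ∩ {v | v j = 0}` and
induces an injective homomorphism `ℤ²/RTT(a) → ℤ³/FCC(a)` sending `e_c` to `e_{succAbove j c}`. Its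
image is the subgroup generated by the `e_i` with `i ≠ j`, and since it carries generators to
generators it is a graph isomorphism onto the projection over `e_j`. -/

open Function Submodule

section ExtendByZero

variable {ι κ : Type*} [DecidableEq ι] [DecidableEq κ] {f : κ → ι}

lemma extend_stdBasis (hf : Injective f) (c : κ) :
    extend f (stdBasis c : κ → ℤ) 0 = stdBasis (f c) := by
  funext i
  by_cases hi : ∃ c', f c' = i
  · obtain ⟨c', rfl⟩ := hi
    simp [hf.extend_apply, _root_.stdBasis, Pi.single_apply, hf.eq_iff]
  · rw [extend_apply' _ _ _ hi]
    have hne : i ≠ f c := fun h => hi ⟨c, h.symm⟩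
    simp [_root_.stdBasis, hne]

variable [Fintype ι] [Fintype κ] {M : Matrix ι ι ℤ} {N : Matrix κ κ ℤ}

lemma closure_range_mk_stdBasis :
    AddSubgroup.closure
      (Set.range fun c => (Submodule.Quotient.mk (stdBasis c) : LatticeVertex N)) = ⊤ := by
  have hrange : (Set.range fun c => (Submodule.Quotient.mk (stdBasis c) : LatticeVertex N)) =
      mkQ (colSpan N) '' Set.range (Pi.basisFun ℤ κ) := by
    rw [← Set.range_comp]
    congr
    funext c
    simp [_root_.stdBasis]
  rw [← span_int_eq_addSubgroupClosure, toAddSubgroup_eq_top, hrange, ← map_span,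
    (Pi.basisFun ℤ κ).span_eq, Submodule.map_top, range_mkQ]

variable (hN : (colSpan M).comap (ExtendByZero.linearMap ℤ f) = colSpan N)

noncomputable def extendByZeroQuotient : LatticeVertex N →ₗ[ℤ] LatticeVertex M :=
  (colSpan N).mapQ (colSpan M) (ExtendByZero.linearMap ℤ f) hN.ge

lemma extendByZeroQuotient_mk (x : κ → ℤ) :
    extendByZeroQuotient hN (Submodule.Quotient.mk x) = Submodule.Quotient.mk (extend f x 0) :=
  rfl

lemma extendByZeroQuotient_injective : Injective (extendByZeroQuotient hN) := by
  rw [← LinearMap.ker_eq_bot, extendByZeroQuotient, ker_mapQ, hN, mkQ_map_self]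

lemma extendByZeroQuotient_mk_stdBasis (hf : Injective f) (c : κ) :
    extendByZeroQuotient hN (Submodule.Quotient.mk (stdBasis c)) =
      Submodule.Quotient.mk (stdBasis (f c)) := by
  rw [extendByZeroQuotient_mk, extend_stdBasis hf]

lemma range_extendByZeroQuotient (hf : Injective f) :
    (extendByZeroQuotient hN).toAddMonoidHom.range =
      AddSubgroup.closure
        ((fun i => (Submodule.Quotient.mk (stdBasis i) : LatticeVertex M)) '' Set.range f) := by
  rw [AddMonoidHom.range_eq_map, ← closure_range_mk_stdBasis, AddMonoidHom.map_closure,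
    ← Set.range_comp, ← Set.range_comp]
  congr 2
  funext c
  exact extendByZeroQuotient_mk_stdBasis hN hf c

lemma extendByZeroQuotient_sub_eq_mk_stdBasis_iff (hf : Injective f) (v w : LatticeVertex N)
    (c : κ) :
    extendByZeroQuotient hN v - extendByZeroQuotient hN w = Submodule.Quotient.mk (stdBasis (f c)) ↔
      v - w = Submodule.Quotient.mk (stdBasis c) := by
  rw [← map_sub, ← extendByZeroQuotient_mk_stdBasis hN hf,
    (extendByZeroQuotient_injective hN).eq_iff]

noncomputable def extendByZeroQuotientEquiv (hf : Injective f) :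
    LatticeVertex N ≃+
      AddSubgroup.closure ((fun i => (Submodule.Quotient.mk (stdBasis i) : LatticeVertex M)) ''
        Set.range f) :=
  (AddMonoidHom.ofInjective (extendByZeroQuotient_injective hN)).trans
    (AddEquiv.addSubgroupCongr (range_extendByZeroQuotient hN hf))

noncomputable def latticeGraphIsoSpannedSubgraph (hf : Injective f) {S : Set ι}
    (hS : Set.range f = S) :
    latticeGraph N ≃g spannedSubgraph M S := by
  subst hS
  refine ⟨(extendByZeroQuotientEquiv hN hf).toEquiv, fun {v w} => ?_⟩
  change (extendByZeroQuotientEquiv hN hf v ≠ extendByZeroQuotientEquiv hN hf w ∧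
    ∃ i ∈ Set.range f,
      extendByZeroQuotient hN v - extendByZeroQuotient hN w =
        Submodule.Quotient.mk (stdBasis i) ∨
      extendByZeroQuotient hN w - extendByZeroQuotient hN v =
        Submodule.Quotient.mk (stdBasis i)) ↔ _
  rw [(extendByZeroQuotientEquiv hN hf).injective.ne_iff, Set.exists_range_iff]
  exact and_congr_right' <| exists_congr fun c => or_congr
    (extendByZeroQuotient_sub_eq_mk_stdBasis_iff hN hf v w c)
    (extendByZeroQuotient_sub_eq_mk_stdBasis_iff hN hf w v c)

end ExtendByZero

section Checkerboard

variable {ι κ : Type*} [Fintype ι] [Fintype κ]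

/-- `a • Dₙ` (see `mem_scaledCheckerboard_iff`), described by divisibility so that it is visibly
stable under padding with zeros, also for `a = 0`. -/
def scaledCheckerboard (ι : Type*) [Fintype ι] (a : ℤ) : Set (ι → ℤ) :=
  {v | (∀ i, a ∣ v i) ∧ 2 * a ∣ ∑ i, v i}

lemma mem_scaledCheckerboard_iff {a : ℤ} {v : ι → ℤ} :
    v ∈ scaledCheckerboard ι a ↔ ∃ w, v = a • w ∧ Even (∑ i, w i) := by
  constructor
  · rintro ⟨hdvd, hsum⟩
    rcases eq_or_ne a 0 with rfl | ha
    · exact ⟨0, funext fun i => zero_dvd_iff.1 (hdvd i), by simp⟩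
    choose w hw using hdvd
    refine ⟨w, funext hw, even_iff_two_dvd.2 ?_⟩
    simp_rw [hw, ← Finset.mul_sum, mul_comm 2 a] at hsum
    exact (mul_dvd_mul_iff_left ha).1 hsum
  · rintro ⟨w, rfl, k, hk⟩
    refine ⟨fun i => dvd_mul_right a (w i), ⟨k, ?_⟩⟩
    simp only [Pi.smul_apply, smul_eq_mul, ← Finset.mul_sum, hk]
    ring

lemma extend_mem_scaledCheckerboard_iff {f : κ → ι} (hf : Injective f) {a : ℤ}
    {x : κ → ℤ} :
    extend f x 0 ∈ scaledCheckerboard ι a ↔ x ∈ scaledCheckerboard κ a := by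
  have hsum : ∑ i, extend f x 0 i = ∑ c, x c :=
    (Fintype.sum_of_injective f hf _ _ (fun i hi => extend_apply' x (0 : ι → ℤ) i hi)
      fun c => (hf.extend_apply x 0 c).symm).symm
  have hdvd : (∀ i, a ∣ extend f x 0 i) ↔ ∀ c, a ∣ x c := by
    refine ⟨fun h c => hf.extend_apply x 0 c ▸ h (f c), fun h i => ?_⟩
    by_cases hi : ∃ c, f c = i
    · obtain ⟨c, rfl⟩ := hi
      exact (hf.extend_apply x 0 c).symm ▸ h c
    · exact (extend_apply' x (0 : ι → ℤ) i hi).symm ▸ dvd_zero a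
  exact and_congr hdvd (by rw [hsum])

end Checkerboard

lemma mem_colSpan_iff {ι : Type*} [Fintype ι] [DecidableEq ι] {M : Matrix ι ι ℤ}
    {v : ι → ℤ} :
    v ∈ colSpan M ↔ ∃ u, M *ᵥ u = v :=
  Iff.rfl

lemma coe_colSpan_fcc (a : ℤ) :
    (colSpan !![a, a, 0; a, 0, a; 0, a, a] : Set (Fin 3 → ℤ)) =
      scaledCheckerboard (Fin 3) a := by
  ext v
  rw [SetLike.mem_coe, mem_colSpan_iff, mem_scaledCheckerboard_iff]
  constructor
  · rintro ⟨u, rfl⟩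
    refine ⟨![u 0 + u 1, u 0 + u 2, u 1 + u 2], ?_, u 0 + u 1 + u 2, ?_⟩
    · ext i; fin_cases i <;> simp [mulVec, dotProduct, Fin.sum_univ_three] <;> ring
    · simp [Fin.sum_univ_three]; ring
  · rintro ⟨w, rfl, k, hk⟩
    simp only [Fin.sum_univ_three] at hk
    refine ⟨![k - w 2, k - w 1, k - w 0], ?_⟩
    ext i
    fin_cases i <;> simp [mulVec, dotProduct, Fin.sum_univ_three] <;> linear_combination -a * hk

lemma coe_colSpan_rtt (a : ℤ) :
    (colSpan !![2 * a, a; 0, a] : Set (Fin 2 → ℤ)) = scaledCheckerboard (Fin 2) a := by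
  ext v
  rw [SetLike.mem_coe, mem_colSpan_iff, mem_scaledCheckerboard_iff]
  constructor
  · rintro ⟨u, rfl⟩
    refine ⟨![2 * u 0 + u 1, u 1], ?_, u 0 + u 1, ?_⟩
    · ext i; fin_cases i <;> simp [mulVec, dotProduct, Fin.sum_univ_two]; ring
    · simp [Fin.sum_univ_two]; ring
  · rintro ⟨w, rfl, k, hk⟩
    simp only [Fin.sum_univ_two] at hk
    refine ⟨![k - w 1, w 1], ?_⟩
    ext i; fin_cases i <;> simp [mulVec, dotProduct, Fin.sum_univ_two]
    linear_combination -a * hk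

lemma comap_extendByZero_colSpan_fcc (a : ℤ) (j : Fin 3) :
    (colSpan !![a, a, 0; a, 0, a; 0, a, a]).comap (ExtendByZero.linearMap ℤ j.succAbove) =
      colSpan !![2 * a, a; 0, a] := by
  ext x
  rw [mem_comap, ← SetLike.mem_coe, coe_colSpan_fcc, ← SetLike.mem_coe, coe_colSpan_rtt]
  exact extend_mem_scaledCheckerboard_iff Fin.succAbove_right_injective

theorem projections_FCC_iso_RTT_general (a : ℕ) :
    (∀ j : Fin 3, Nonempty (projGraph !![(a : ℤ), a, 0; a, 0, a; 0, a, a] j ≃g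
      latticeGraph !![(2 * a : ℤ), a; 0, a])) ∧
    (∀ j k : Fin 3, Nonempty (projGraph !![(a : ℤ), a, 0; a, 0, a; 0, a, a] j ≃g
      projGraph !![(a : ℤ), a, 0; a, 0, a; 0, a, a] k)) := by
  have iso (j : Fin 3) :
      projGraph !![(a : ℤ), a, 0; a, 0, a; 0, a, a] j ≃g latticeGraph !![(2 * a : ℤ), a; 0, a] :=
    (latticeGraphIsoSpannedSubgraph (comap_extendByZero_colSpan_fcc a j)
      Fin.succAbove_right_injective (Fin.range_succAbove j)).symm
  exact ⟨fun j => ⟨iso j⟩, fun j k => ⟨(iso j).trans (iso k).symm⟩⟩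

/-- every projection of `FCC(a)` is isomorphic to `RTT(a)`; in particular,
all three projections are pairwise isomorphic. -/
theorem projections_FCC_iso_RTT (a : ℕ) (ha : 0 < a) :
    (∀ j : Fin 3, Nonempty (projGraph !![(a : ℤ), a, 0; a, 0, a; 0, a, a] j ≃g
      latticeGraph !![(2 * a : ℤ), a; 0, a])) ∧
    (∀ j k : Fin 3, Nonempty (projGraph !![(a : ℤ), a, 0; a, 0, a; 0, a, a] j ≃g
      projGraph !![(a : ℤ), a, 0; a, 0, a; 0, a, a] k)) :=
  projections_FCC_iso_RTT_general a
end

section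
/- For every positive integer a, the projection over e₃ of the body-centered cubic lattice graph BCC(a) is isomorphic to the two-dimensional torus T(2a,2a). -/
open Matrix

/-!
The projection is the Cayley graph of the subgroup `H` of `ℤ³/BCC(a)ℤ³` generated by the classes
of `e₁, e₂`. The map `x ↦ (x₁ + x₃, x₂ + x₃) mod 2a` sends the columns of `BCC(a)` to
`(0, 2a)`, `(2a, 0)` and `(0, 0)`, so it factors through the quotient. On `H`, whose elements are
the classes of `(m, n, 0)`, it is onto `(ℤ/2aℤ)²`, and injective because
`(2am, 2an, 0) = BCC(a) (n, m, m + n)`. It sends `e₁, e₂` to the unit vectors, hence it is an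
isomorphism of Cayley graphs onto the torus `T(2a, 2a)`.
-/

theorem Pi.sub_eq_single_iff {ι : Type*} [DecidableEq ι] {β : ι → Type*}
    [∀ i, AddCommGroup (β i)] {x y : ∀ i, β i} {i : ι} {c : β i} :
    x - y = Pi.single i c ↔ (∀ j ≠ i, x j = y j) ∧ x i = y i + c := by
  rw [eq_comm, Pi.single, Function.update_eq_iff]
  simp only [Pi.sub_apply, Pi.zero_apply, eq_comm (a := (0 : β _)), sub_eq_zero,
    eq_sub_iff_add_eq', eq_comm (a := x i)]
  tauto

theorem torusGraph_adj_iff {n : ℕ} {a : Fin n → ℕ} {x y : ∀ i, ZMod (a i)} :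
    (torusGraph a).Adj x y ↔ x ≠ y ∧ ∃ i, x - y = Pi.single i 1 ∨ y - x = Pi.single i 1 := by
  change (x ≠ y ∧ ∃ i, (∀ j, j ≠ i → x j = y j) ∧ (x i = y i + 1 ∨ y i = x i + 1)) ↔ _
  simp only [Pi.sub_eq_single_iff, and_or_left]
  exact and_congr_right fun _ => exists_congr fun _ =>
    or_congr_right (and_congr_left' (forall₂_congr fun _ _ => eq_comm))

section Spanned

variable {ι : Type*} [Fintype ι] [DecidableEq ι] (M : Matrix ι ι ℤ) (S : Set ι)

abbrev spannedSubgroup : AddSubgroup (LatticeVertex M) :=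
  AddSubgroup.closure ((fun i => (Submodule.Quotient.mk (stdBasis i) : LatticeVertex M)) '' S)

variable {M S}

theorem mk_stdBasis_mem_spannedSubgroup {i : ι} (hi : i ∈ S) :
    (Submodule.Quotient.mk (stdBasis i) : LatticeVertex M) ∈ spannedSubgroup M S :=
  AddSubgroup.subset_closure (Set.mem_image_of_mem _ hi)

def spannedSubgraph.isoTorusOfAddEquiv {n : ℕ} {a : Fin n → ℕ}
    (e : spannedSubgroup M S ≃+ (∀ k, ZMod (a k))) (σ : Fin n ≃ S)
    (he : ∀ k, e ⟨_, mk_stdBasis_mem_spannedSubgroup (σ k).2⟩ = Pi.single k 1) :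
    spannedSubgraph M S ≃g torusGraph a where
  toEquiv := e.toEquiv
  map_rel_iff' {v w} := by
    have hsub : ∀ (v w : spannedSubgroup M S) k,
        e v - e w = Pi.single k 1 ↔
          (v : LatticeVertex M) - (w : LatticeVertex M) =
            Submodule.Quotient.mk (stdBasis (σ k : ι)) := by
      intro v w k
      rw [← he, ← map_sub, e.injective.eq_iff, Subtype.ext_iff, AddSubgroup.coe_sub]
    simp only [AddEquiv.toEquiv_eq_coe, EquivLike.coe_coe, torusGraph_adj_iff, hsub,
      e.injective.ne_iff]
    refine and_congr_right fun _ => ?_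
    rw [σ.exists_congr_left, Subtype.exists]
    simp only [Equiv.apply_symm_apply, exists_prop]

end Spanned

section BCC

variable (a : ℕ)

abbrev bccMatrix : Matrix (Fin 3) (Fin 3) ℤ := !![-(a : ℤ), a, a; a, -a, a; a, a, -a]

def bccReduction : (Fin 3 → ℤ) →ₗ[ℤ] (Fin 2 → ZMod (2 * a)) where
  toFun x j := ((x j.castSucc + x 2 : ℤ) : ZMod (2 * a))
  map_add' x y := by funext j; push_cast [Pi.add_apply]; ring
  map_smul' c x := by
    funext j
    simp only [Pi.smul_apply, smul_eq_mul, RingHom.id_apply]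
    push_cast
    ring

theorem colSpan_bccMatrix_le_ker : colSpan (bccMatrix a) ≤ LinearMap.ker (bccReduction a) := by
  rintro _ ⟨y, rfl⟩
  rw [LinearMap.mem_ker]
  funext j
  refine (ZMod.intCast_zmod_eq_zero_iff_dvd _ _).2 ?_
  fin_cases j
  · exact ⟨y 1, by simp [mulVec, dotProduct, Fin.sum_univ_three]; ring⟩
  · exact ⟨y 0, by simp [mulVec, dotProduct, Fin.sum_univ_three]; ring⟩

theorem mem_colSpan_bccMatrix (m n : ℤ) :
    ![2 * a * m, 2 * a * n, 0] ∈ colSpan (bccMatrix a) :=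
  ⟨![n, m, m + n], by ext j; fin_cases j <;> simp [mulVec, dotProduct, Fin.sum_univ_three] <;> ring⟩

def bccQuotientMap : LatticeVertex (bccMatrix a) →ₗ[ℤ] (Fin 2 → ZMod (2 * a)) :=
  (colSpan (bccMatrix a)).liftQ (bccReduction a) (colSpan_bccMatrix_le_ker a)

theorem bccQuotientMap_mk (m n : ℤ) :
    bccQuotientMap a (Submodule.Quotient.mk ![m, n, 0]) = ![(m : ZMod (2 * a)), n] := by
  rw [bccQuotientMap, Submodule.liftQ_apply]
  ext j; fin_cases j <;> simp [bccReduction]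

theorem mem_spannedSubgroup_bccMatrix_iff {v : LatticeVertex (bccMatrix a)} :
    v ∈ spannedSubgroup (bccMatrix a) {i | i ≠ 2} ↔
      ∃ m n : ℤ, Submodule.Quotient.mk ![m, n, 0] = v := by
  have hS : {i : Fin 3 | i ≠ 2} = {0, 1} := by ext i; fin_cases i <;> simp
  have hmk : ∀ m n : ℤ, m • (Submodule.Quotient.mk (stdBasis 0) : LatticeVertex (bccMatrix a)) +
      n • Submodule.Quotient.mk (stdBasis 1) = Submodule.Quotient.mk ![m, n, 0] := by
    intro m n
    rw [← Submodule.Quotient.mk_smul, ← Submodule.Quotient.mk_smul, ← Submodule.Quotient.mk_add]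
    congr 1
    ext j; fin_cases j <;> simp [_root_.stdBasis]
  simp only [spannedSubgroup, hS, Set.image_pair, AddSubgroup.mem_closure_pair, hmk]

def bccProjHom : spannedSubgroup (bccMatrix a) {i | i ≠ 2} →+ (Fin 2 → ZMod (2 * a)) :=
  (bccQuotientMap a).toAddMonoidHom.comp (AddSubgroup.subtype _)

theorem bccProjHom_injective : Function.Injective (bccProjHom a) := by
  refine (injective_iff_map_eq_zero _).2 ?_
  rintro ⟨v, hv⟩ hv0
  obtain ⟨m, n, rfl⟩ := (mem_spannedSubgroup_bccMatrix_iff a).1 hv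
  have hdvd : ∀ k : ℤ, (k : ZMod (2 * a)) = 0 → 2 * (a : ℤ) ∣ k := fun k hk =>
    mod_cast (ZMod.intCast_zmod_eq_zero_iff_dvd k (2 * a)).1 hk
  have hmn : (m : ZMod (2 * a)) = 0 ∧ (n : ZMod (2 * a)) = 0 := by
    simpa [bccProjHom, bccQuotientMap_mk] using hv0
  obtain ⟨m', rfl⟩ := hdvd m hmn.1
  obtain ⟨n', rfl⟩ := hdvd n hmn.2
  exact Subtype.ext ((Submodule.Quotient.mk_eq_zero _).2 (mem_colSpan_bccMatrix a m' n'))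

theorem bccProjHom_surjective : Function.Surjective (bccProjHom a) := by
  intro u
  obtain ⟨m, hm⟩ := ZMod.intCast_surjective (u 0)
  obtain ⟨n, hn⟩ := ZMod.intCast_surjective (u 1)
  refine ⟨⟨_, (mem_spannedSubgroup_bccMatrix_iff a).2 ⟨m, n, rfl⟩⟩, ?_⟩
  ext j; fin_cases j <;> simp [bccProjHom, bccQuotientMap_mk, hm, hn]

noncomputable def bccProjEquiv :
    spannedSubgroup (bccMatrix a) {i | i ≠ 2} ≃+ (Fin 2 → ZMod (2 * a)) :=
  AddEquiv.ofBijective (bccProjHom a) ⟨bccProjHom_injective a, bccProjHom_surjective a⟩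

theorem bccProjEquiv_mk_stdBasis (k : Fin 2) :
    bccProjEquiv a ⟨_, mk_stdBasis_mem_spannedSubgroup (finSuccAboveEquiv 2 k).2⟩ =
      Pi.single k 1 := by
  ext j
  fin_cases k <;> fin_cases j <;>
    simp [bccProjEquiv, bccProjHom, bccQuotientMap, bccReduction, _root_.stdBasis,
      finSuccAboveEquiv_apply, Fin.succAbove]

end BCC

theorem projection_BCC_iso_torus_general (a : ℕ) :
    Nonempty (projGraph !![-(a : ℤ), a, a; a, -a, a; a, a, -a] (2 : Fin 3) ≃g
      torusGraph ![2 * a, 2 * a]) := by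
  rw [show ![2 * a, 2 * a] = fun _ => 2 * a by rw [vec_single_eq_const, vecCons_const]]
  exact ⟨spannedSubgraph.isoTorusOfAddEquiv (bccProjEquiv a) (finSuccAboveEquiv 2)
    (bccProjEquiv_mk_stdBasis a)⟩

/-- the projection over `e₃` of `BCC(a)` is isomorphic to the
two-dimensional torus `T(2a,2a)`. -/
theorem projection_BCC_iso_torus (a : ℕ) (ha : 0 < a) :
    Nonempty (projGraph !![-(a : ℤ), a, a; a, -a, a; a, a, -a] (2 : Fin 3) ≃g
      torusGraph ![2 * a, 2 * a]) :=
  projection_BCC_iso_torus_general a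
end

section
/- Let C ∈ ℤ^{k×k}, A ∈ ℤ^{p×p}, B ∈ ℤ^{q×q} be nonsingular, and let R_A ∈ ℤ^{k×p}, R_B ∈ ℤ^{k×q}. Let W ∈ ℤ^{(k+p+q)×(k+p+q)} be the block matrix with block rows (C, R_A, R_B), (0, A, 0), (0, 0, B), and set M₁ = [[C,R_A],[0,A]] and M₂ = [[C,R_B],[0,B]]. Then W is nonsingular, the subgraph of 𝒢(W) spanned by {1,…,k+p} is isomorphic to 𝒢(M₁), and the subgraph of 𝒢(W) spanned by {1,…,k} ∪ {k+p+1,…,k+p+q} is isomorphic to 𝒢(M₂); hence 𝒢(W) is a common lift of 𝒢(M₁) and 𝒢(M₂), and its dimension k+p+q satisfies max(k+p, k+q) ≤ k+p+q ≤ (k+p)+(k+q). -/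
/-!
Order the coordinates of `ℤ^β` as `α ⊕ γ` so that `W` becomes block upper triangular with
diagonal blocks `M` and `N`, `N` nonsingular. Extending vectors by zero maps `Mℤ^α` into
`Wℤ^β` because the lower-left block vanishes, and `Wx ∈ ℤ^α × 0` forces `Nx_γ = 0`, hence
`x_γ = 0` and `Wx = Mx_α`; so the induced map `ℤ^α/Mℤ^α → ℤ^β/Wℤ^β` is injective. It sends
`[e_a]` to `[e_a]`, so its image is the subgroup generated by the directions in `α`, and it is
a graph isomorphism onto the subgraph they span. The block matrix of the theorem is block
triangular in this sense both for the split `(k, p) ⊕ q` and for `(k, q) ⊕ p`.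
-/

open Matrix

namespace LatticeGraph

variable {α β γ : Type*}

def extendByZero (e : α ⊕ γ ≃ β) : (α → ℤ) →ₗ[ℤ] (β → ℤ) where
  toFun v := Sum.elim v 0 ∘ e.symm
  map_add' u v := by ext b; obtain ⟨x, rfl⟩ := e.surjective b; cases x <;> simp
  map_smul' c v := by ext b; obtain ⟨x, rfl⟩ := e.surjective b; cases x <;> simp

theorem extendByZero_apply (e : α ⊕ γ ≃ β) (v : α → ℤ) :
    extendByZero e v = Sum.elim v 0 ∘ e.symm := rfl

theorem extendByZero_stdBasis [DecidableEq α] [DecidableEq β] (e : α ⊕ γ ≃ β) (a : α) :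
    extendByZero e (stdBasis a) = stdBasis (e (Sum.inl a)) := by
  ext b
  obtain ⟨x, rfl⟩ := e.surjective b
  cases x <;> simp [extendByZero_apply, _root_.stdBasis, Pi.single_apply]

variable [Fintype α] [Fintype β] [Fintype γ]

theorem mulVec_comp_symm (e : α ⊕ γ ≃ β) (W : Matrix β β ℤ) (x : α ⊕ γ → ℤ) :
    W *ᵥ (x ∘ e.symm) = (W.submatrix e e *ᵥ x) ∘ e.symm := by
  rw [Matrix.submatrix_mulVec_equiv, Function.comp_assoc, e.self_comp_symm,
    Function.comp_id]

variable {e : α ⊕ γ ≃ β} {W : Matrix β β ℤ} {M : Matrix α α ℤ} {R : Matrix α γ ℤ}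
  {N : Matrix γ γ ℤ}

theorem mulVec_extendByZero (hW : W.submatrix e e = Matrix.fromBlocks M R 0 N) (v : α → ℤ) :
    W *ᵥ extendByZero e v = extendByZero e (M *ᵥ v) := by
  simp [extendByZero_apply, mulVec_comp_symm, hW, Matrix.fromBlocks_mulVec]

variable [DecidableEq α] [DecidableEq β]

theorem closure_mk_stdBasis_eq_top (M : Matrix α α ℤ) :
    AddSubgroup.closure
      (Set.range fun a => (Submodule.Quotient.mk (stdBasis a) : LatticeVertex M)) = ⊤ := by
  have hbasis : (stdBasis : α → α → ℤ) = Pi.basisFun ℤ α :=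
    funext fun a => (Pi.basisFun_apply ℤ α a).symm
  rw [← Submodule.span_int_eq_addSubgroupClosure, Submodule.toAddSubgroup_eq_top,
    show (fun a => (Submodule.Quotient.mk (stdBasis a) : LatticeVertex M)) =
      (colSpan M).mkQ ∘ stdBasis from rfl,
    Set.range_comp, Submodule.span_image, hbasis, (Pi.basisFun ℤ α).span_eq, Submodule.map_top,
    Submodule.range_mkQ]

noncomputable def spannedSubgraphIsoOfInjective {M : Matrix α α ℤ} {W : Matrix β β ℤ}
    (ψ : LatticeVertex M →+ LatticeVertex W) (hψ : Function.Injective ψ) (f : α → β)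
    (hf : ∀ a, ψ (Submodule.Quotient.mk (stdBasis a)) =
      Submodule.Quotient.mk (_root_.stdBasis (f a))) :
    spannedSubgraph W (Set.range f) ≃g latticeGraph M :=
  have hrange : ψ.range = AddSubgroup.closure
      ((fun i => (Submodule.Quotient.mk (stdBasis i) : LatticeVertex W)) '' Set.range f) := by
    rw [AddMonoidHom.range_eq_map, ← closure_mk_stdBasis_eq_top, AddMonoidHom.map_closure,
      ← Set.range_comp, ← Set.range_comp]
    exact congrArg _ (congrArg Set.range (funext hf))
  let φ := (AddMonoidHom.ofInjective hψ).trans (AddEquiv.addSubgroupCongr hrange)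
  RelIso.symm
    { toEquiv := φ.toEquiv
      map_rel_iff' := fun {v w} => by
        have hφ : ∀ x, ((φ x : LatticeVertex W)) = ψ x := fun _ => rfl
        simp only [spannedSubgraph, latticeGraph, Set.exists_range_iff,
          AddEquiv.toEquiv_eq_coe, EquivLike.coe_coe, hφ, ← map_sub, ← hf, hψ.eq_iff,
          φ.injective.ne_iff] }

variable [DecidableEq γ]

theorem comap_extendByZero_colSpan (hW : W.submatrix e e = Matrix.fromBlocks M R 0 N)
    (hN : N.det ≠ 0) : (colSpan W).comap (extendByZero e) = colSpan M := by
  refine le_antisymm ?_ ?_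
  · rintro v ⟨x, hx⟩
    obtain ⟨y, rfl⟩ : ∃ y, x = y ∘ e.symm := ⟨x ∘ e, by simp [Function.comp_assoc]⟩
    have hy : Matrix.fromBlocks M R 0 N *ᵥ y = Sum.elim v 0 := by
      simpa [mulVec_comp_symm, hW, extendByZero_apply,
        e.symm.surjective.injective_comp_right.eq_iff] using hx
    rw [Matrix.fromBlocks_mulVec] at hy
    have hN0 : N *ᵥ (y ∘ Sum.inr) = 0 := by simpa using congrArg (· ∘ Sum.inr) hy
    have hM : M *ᵥ (y ∘ Sum.inl) + R *ᵥ (y ∘ Sum.inr) = v := congrArg (· ∘ Sum.inl) hy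
    rw [Matrix.eq_zero_of_mulVec_eq_zero hN hN0, Matrix.mulVec_zero, add_zero] at hM
    exact ⟨y ∘ Sum.inl, hM⟩
  · rintro _ ⟨u, rfl⟩
    exact ⟨extendByZero e u, mulVec_extendByZero hW u⟩

noncomputable def spannedSubgraphIsoOfBlockTriangular
    (hW : W.submatrix e e = Matrix.fromBlocks M R 0 N) (hN : N.det ≠ 0) :
    spannedSubgraph W (Set.range (e ∘ Sum.inl)) ≃g latticeGraph M :=
  have hcomap := comap_extendByZero_colSpan hW hN
  let ψ := (colSpan M).mapQ (colSpan W) (extendByZero e) hcomap.ge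
  spannedSubgraphIsoOfInjective ψ.toAddMonoidHom
    (by
      rw [LinearMap.toAddMonoidHom_coe, ← LinearMap.ker_eq_bot, Submodule.ker_mapQ, hcomap,
        Submodule.mkQ_map_self])
    _ fun a => by simp [ψ, extendByZero_stdBasis]

end LatticeGraph

/-- the block matrix `W = [[C,R_A,R_B],[0,A,0],[0,0,B]]` is nonsingular and
`𝒢(W)` is a common lift of `𝒢([[C,R_A],[0,A]])` and `𝒢([[C,R_B],[0,B]])`, of dimension
`k+p+q` with `max(k+p,k+q) ≤ k+p+q ≤ (k+p)+(k+q)`. -/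
theorem common_lift_construction {k p q : ℕ}
    (C : Matrix (Fin k) (Fin k) ℤ) (A : Matrix (Fin p) (Fin p) ℤ)
    (B : Matrix (Fin q) (Fin q) ℤ)
    (RA : Matrix (Fin k) (Fin p) ℤ) (RB : Matrix (Fin k) (Fin q) ℤ)
    (hC : C.det ≠ 0) (hA : A.det ≠ 0) (hB : B.det ≠ 0) :
    (Matrix.fromBlocks C (Matrix.of fun i j => Sum.elim (RA i) (RB i) j) 0
        (Matrix.fromBlocks A 0 0 B)).det ≠ 0 ∧
    Nonempty (spannedSubgraph
      (Matrix.fromBlocks C (Matrix.of fun i j => Sum.elim (RA i) (RB i) j) 0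
        (Matrix.fromBlocks A 0 0 B))
      (Set.range Sum.inl ∪ Set.range (Sum.inr ∘ Sum.inl)) ≃g
      latticeGraph (Matrix.fromBlocks C RA 0 A)) ∧
    Nonempty (spannedSubgraph
      (Matrix.fromBlocks C (Matrix.of fun i j => Sum.elim (RA i) (RB i) j) 0
        (Matrix.fromBlocks A 0 0 B))
      (Set.range Sum.inl ∪ Set.range (Sum.inr ∘ Sum.inr)) ≃g
      latticeGraph (Matrix.fromBlocks C RB 0 B)) ∧
    (max (k + p) (k + q) ≤ k + p + q ∧ k + p + q ≤ (k + p) + (k + q)) := by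
  have hsplit₁ : Set.range (Equiv.sumAssoc (Fin k) (Fin p) (Fin q) ∘ Sum.inl) =
      Set.range Sum.inl ∪ Set.range (Sum.inr ∘ Sum.inl) := by
    rw [← Set.Sum.elim_range]
    rfl
  -- reordering the coordinates as `(k, q, p)` puts `[[C, R_B], [0, B]]` in the top-left corner
  have hsplit₂ : Set.range (((Equiv.sumAssoc (Fin k) (Fin q) (Fin p)).trans
      ((Equiv.refl _).sumCongr (Equiv.sumComm _ _))) ∘ Sum.inl) =
      Set.range Sum.inl ∪ Set.range (Sum.inr ∘ Sum.inr) := by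
    rw [← Set.Sum.elim_range]
    congr 1
    ext (i | i) <;> rfl
  refine ⟨?_, ?_, ?_, by omega⟩
  · rw [Matrix.det_fromBlocks_zero₂₁, Matrix.det_fromBlocks_zero₂₁]
    exact mul_ne_zero hC (mul_ne_zero hA hB)
  · rw [← hsplit₁]
    exact ⟨LatticeGraph.spannedSubgraphIsoOfBlockTriangular (R := Matrix.fromRows RB 0)
      (by ext ((i | i) | i) ((j | j) | j) <;> simp) hB⟩
  · rw [← hsplit₂]
    exact ⟨LatticeGraph.spannedSubgraphIsoOfBlockTriangular (R := Matrix.fromRows RA 0)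
      (by ext ((i | i) | i) ((j | j) | j) <;> simp) hA⟩
end

section
/- Let M ∈ ℤ^{3×3} be nonsingular. The lattice graph 𝒢(M) is linearly symmetric if and only if there exists a signed permutation matrix P of order 3 (P³ = I and P ≠ I) together with an integer matrix Q such that PM = MQ, i.e., a signed permutation of order 3 inducing an automorphism of 𝒢(M). -/
open Matrix

/-!
A signed permutation matrix is `P = signedPermMatrix σ s` (permutation `σ`, column signs `s`),
and `P ↦ σ` is multiplicative. Linear symmetry provides lattice-stabilizing `P₁, P₂` whose
permutations send `0` to `1` and to `2`; one of `σ₁, σ₂, σ₁σ₂` is then a 3-cycle `σ`, and for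
the corresponding `P` the cube `P³` is a diagonal sign matrix, so `P²` has order 3. Conversely,
if `P` has order 3 then its permutation is a 3-cycle, since a diagonal sign matrix is an
involution; hence `1, P, P²` send `e₁` to `±e₁, ±e₂, ±e₃` in some order.
-/

section SignedPermMatrix

variable {ι : Type*} [DecidableEq ι]

def signedPermMatrix (σ : Equiv.Perm ι) (s : ι → ℤˣ) : Matrix ι ι ℤ :=
  Matrix.of fun i j => if i = σ j then (s j : ℤ) else 0

theorem signedPermMatrix_one : signedPermMatrix (1 : Equiv.Perm ι) (fun _ => 1) = 1 := by
  ext i j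
  by_cases h : i = j <;> simp [signedPermMatrix, one_apply, h]

theorem signedPermMatrix_inj {σ τ : Equiv.Perm ι} {s t : ι → ℤˣ} :
    signedPermMatrix σ s = signedPermMatrix τ t ↔ σ = τ ∧ s = t := by
  refine ⟨fun h => ?_, fun ⟨hστ, hst⟩ => hστ ▸ hst ▸ rfl⟩
  have hentry (j : ι) : (if σ j = τ j then (t j : ℤ) else 0) = s j := by
    simpa [signedPermMatrix] using (congrFun (congrFun h (σ j)) j).symm
  have hστ : σ = τ := Equiv.ext fun j => by
    by_contra hne
    exact (s j).ne_zero (by simpa [hne] using (hentry j).symm)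
  refine ⟨hστ, funext fun j => Units.ext ?_⟩
  simpa [hστ] using (hentry j).symm

variable [Fintype ι]

theorem signedPermMatrix_mul (σ τ : Equiv.Perm ι) (s t : ι → ℤˣ) :
    signedPermMatrix σ s * signedPermMatrix τ t =
      signedPermMatrix (σ * τ) (fun j => s (τ j) * t j) := by
  ext i j
  simp only [signedPermMatrix, mul_apply, of_apply, mul_ite, mul_zero, Finset.sum_ite_eq',
    Finset.mem_univ, if_true, Equiv.Perm.mul_apply, Units.val_mul]
  split_ifs <;> simp_all [mul_comm]

theorem signedPermMatrix_pow (σ : Equiv.Perm ι) (s : ι → ℤˣ) (k : ℕ) :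
    ∃ t, signedPermMatrix σ s ^ k = signedPermMatrix (σ ^ k) t := by
  induction k with
  | zero => exact ⟨fun _ => 1, by rw [pow_zero, pow_zero, signedPermMatrix_one]⟩
  | succ k ih =>
    obtain ⟨t, ht⟩ := ih
    exact ⟨_, by rw [pow_succ, ht, signedPermMatrix_mul, pow_succ]⟩

theorem signedPermMatrix_pow_eq_one {σ : Equiv.Perm ι} {s : ι → ℤˣ} {k : ℕ}
    (h : signedPermMatrix σ s ^ k = 1) : σ ^ k = 1 := by
  obtain ⟨t, ht⟩ := signedPermMatrix_pow σ s k
  rw [ht, ← signedPermMatrix_one] at h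
  exact (signedPermMatrix_inj.mp h).1

theorem signedPermMatrix_one_sq (s : ι → ℤˣ) : signedPermMatrix 1 s ^ 2 = 1 := by
  rw [sq, signedPermMatrix_mul, ← signedPermMatrix_one]
  simp [Int.units_mul_self]

theorem signedPermMatrix_sq_pow_three {σ : Equiv.Perm ι} (hσ : σ ^ 3 = 1) (s : ι → ℤˣ) :
    (signedPermMatrix σ s ^ 2) ^ 3 = 1 := by
  obtain ⟨t, ht⟩ := signedPermMatrix_pow σ s 3
  rw [← pow_mul, mul_comm, pow_mul, ht, hσ, signedPermMatrix_one_sq]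

theorem signedPermMatrix_eq_one_of_pow_three {s : ι → ℤˣ}
    (h : signedPermMatrix 1 s ^ 3 = 1) : signedPermMatrix 1 s = 1 := by
  rwa [pow_succ, signedPermMatrix_one_sq, one_mul] at h

theorem signedPermMatrix_mulVec_stdBasis (σ : Equiv.Perm ι) (s : ι → ℤˣ) (j : ι) :
    signedPermMatrix σ s *ᵥ stdBasis j = (s j : ℤ) • stdBasis (σ j) := by
  funext i
  simp [signedPermMatrix, mulVec, dotProduct, _root_.stdBasis, Pi.single_apply, mul_ite]

theorem apply_eq_of_signedPermMatrix_mulVec_stdBasis {σ : Equiv.Perm ι} {s : ι → ℤˣ} {i j : ι}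
    (h : signedPermMatrix σ s *ᵥ stdBasis j = stdBasis i ∨
      signedPermMatrix σ s *ᵥ stdBasis j = -stdBasis i) : σ j = i := by
  by_contra hne
  rw [signedPermMatrix_mulVec_stdBasis] at h
  rcases h with h | h <;>
    simpa [_root_.stdBasis, Pi.single_apply, hne, (s j).ne_zero] using congrFun h (σ j)

theorem signedPermMatrix_mulVec_stdBasis_eq_or (σ : Equiv.Perm ι) (s : ι → ℤˣ) (j : ι) :
    signedPermMatrix σ s *ᵥ stdBasis j = stdBasis (σ j) ∨
      signedPermMatrix σ s *ᵥ stdBasis j = -stdBasis (σ j) := by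
  rw [signedPermMatrix_mulVec_stdBasis]
  rcases Int.units_eq_one_or (s j) with h | h <;> simp [h]

end SignedPermMatrix

section IsSignedPerm

variable {n : ℕ}

theorem isSignedPerm_signedPermMatrix (σ : Equiv.Perm (Fin n)) (s : Fin n → ℤˣ) :
    IsSignedPerm (signedPermMatrix σ s) := by
  refine ⟨fun i j => ?_, fun i => ⟨σ.symm i, ?_, fun j hj => ?_⟩, fun j => ⟨σ j, ?_, fun i hi => ?_⟩⟩
  · simp only [signedPermMatrix, of_apply]
    split_ifs
    · rcases Int.units_eq_one_or (s j) with h | h <;> simp [h]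
    · simp
  · simp [signedPermMatrix]
  · have hi : i = σ j := by
      by_contra hne
      simp [signedPermMatrix, hne] at hj
    simp [hi]
  · simp [signedPermMatrix]
  · by_contra hne
    exact hi (by simp [signedPermMatrix, hne])

theorem IsSignedPerm.exists_eq_signedPermMatrix {P : Matrix (Fin n) (Fin n) ℤ}
    (hP : IsSignedPerm P) : ∃ σ s, P = signedPermMatrix σ s := by
  obtain ⟨hentry, hrow, hcol⟩ := hP
  choose f hf hfu using hcol
  have hinj : Function.Injective f := fun a b hab =>
    (hrow (f a)).unique (hf a) (hab ▸ hf b)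
  let σ := Equiv.ofBijective f (Finite.injective_iff_bijective.mp hinj)
  refine ⟨σ, fun j => if P (f j) j = 1 then 1 else -1, ?_⟩
  ext i j
  by_cases h : i = f j
  · subst h
    rcases hentry (f j) j with h' | h' | h'
    · exact absurd h' (hf j)
    all_goals simp [signedPermMatrix, σ, h']
  · have h0 : P i j = 0 := by
      by_contra h'
      exact h (hfu j i h')
    simp [signedPermMatrix, σ, h, h0]

theorem IsSignedPerm.pow {P : Matrix (Fin n) (Fin n) ℤ} (hP : IsSignedPerm P) (k : ℕ) :
    IsSignedPerm (P ^ k) := by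
  obtain ⟨σ, s, rfl⟩ := hP.exists_eq_signedPermMatrix
  obtain ⟨t, ht⟩ := signedPermMatrix_pow σ s k
  exact ht ▸ isSignedPerm_signedPermMatrix _ _

end IsSignedPerm

/-- `P ∈ latticeStabilizer M` iff `P` maps the column lattice `M Rⁿ` into itself. -/
def latticeStabilizer {ι R : Type*} [Fintype ι] [DecidableEq ι] [Semiring R]
    (M : Matrix ι ι R) : Submonoid (Matrix ι ι R) where
  carrier := {P | ∃ Q, P * M = M * Q}
  one_mem' := ⟨1, by rw [one_mul, mul_one]⟩
  mul_mem' := by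
    rintro P P' ⟨Q, hQ⟩ ⟨Q', hQ'⟩
    exact ⟨Q * Q', by rw [mul_assoc, hQ', ← mul_assoc, hQ, mul_assoc]⟩

set_option maxRecDepth 10000 in
theorem Equiv.Perm.fin_three_pow_three_or_mul_pow_three (σ τ : Equiv.Perm (Fin 3))
    (hσ : σ 0 = 1) (hτ : τ 0 = 2) :
    (σ ^ 3 = 1 ∧ σ ≠ 1) ∨ (τ ^ 3 = 1 ∧ τ ≠ 1) ∨ ((σ * τ) ^ 3 = 1 ∧ σ * τ ≠ 1) := by
  revert σ τ
  decide

set_option maxRecDepth 10000 in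
theorem Equiv.Perm.fin_three_exists_pow_apply_zero {σ : Equiv.Perm (Fin 3)} (h3 : σ ^ 3 = 1)
    (h1 : σ ≠ 1) (i : Fin 3) : ∃ k : Fin 3, (σ ^ (k : ℕ)) 0 = i := by
  revert σ i
  decide

theorem exists_orderThree_of_signedPermMatrix_mem {n : ℕ} {M : Matrix (Fin n) (Fin n) ℤ}
    {σ : Equiv.Perm (Fin n)} {s : Fin n → ℤˣ} (hσ3 : σ ^ 3 = 1) (hσ1 : σ ≠ 1)
    (hP : signedPermMatrix σ s ∈ latticeStabilizer M) :
    ∃ P, IsSignedPerm P ∧ P ^ 3 = 1 ∧ P ≠ 1 ∧ P ∈ latticeStabilizer M := by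
  refine ⟨_, (isSignedPerm_signedPermMatrix σ s).pow 2, signedPermMatrix_sq_pow_three hσ3 s,
    fun h => hσ1 ?_, pow_mem hP 2⟩
  simpa [pow_succ, signedPermMatrix_pow_eq_one h] using hσ3

theorem linearlySymmetric_iff_order_three_general (M : Matrix (Fin 3) (Fin 3) ℤ) :
    IsLinearlySymmetric M ↔
      ∃ P : Matrix (Fin 3) (Fin 3) ℤ, IsSignedPerm P ∧ P ^ 3 = 1 ∧ P ≠ 1 ∧
        ∃ Q : Matrix (Fin 3) (Fin 3) ℤ, P * M = M * Q := by
  constructor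
  · intro h
    obtain ⟨P₁, hP₁, hM₁, hv₁⟩ := h 1
    obtain ⟨P₂, hP₂, hM₂, hv₂⟩ := h 2
    obtain ⟨σ₁, s₁, rfl⟩ := hP₁.exists_eq_signedPermMatrix
    obtain ⟨σ₂, s₂, rfl⟩ := hP₂.exists_eq_signedPermMatrix
    have hM₁₂ := (latticeStabilizer M).mul_mem hM₁ hM₂
    rw [signedPermMatrix_mul] at hM₁₂
    rcases Equiv.Perm.fin_three_pow_three_or_mul_pow_three σ₁ σ₂
      (apply_eq_of_signedPermMatrix_mulVec_stdBasis hv₁)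
      (apply_eq_of_signedPermMatrix_mulVec_stdBasis hv₂) with ⟨h3, h1⟩ | ⟨h3, h1⟩ | ⟨h3, h1⟩
    · exact exists_orderThree_of_signedPermMatrix_mem h3 h1 hM₁
    · exact exists_orderThree_of_signedPermMatrix_mem h3 h1 hM₂
    · exact exists_orderThree_of_signedPermMatrix_mem h3 h1 hM₁₂
  · rintro ⟨P, hP, hP3, hP1, hPM⟩ i
    obtain ⟨σ, s, rfl⟩ := hP.exists_eq_signedPermMatrix
    have hσ3 : σ ^ 3 = 1 := signedPermMatrix_pow_eq_one hP3
    have hσ1 : σ ≠ 1 := by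
      rintro rfl
      exact hP1 (signedPermMatrix_eq_one_of_pow_three hP3)
    obtain ⟨k, hk⟩ := Equiv.Perm.fin_three_exists_pow_apply_zero hσ3 hσ1 i
    obtain ⟨t, ht⟩ := signedPermMatrix_pow σ s k
    refine ⟨_, hP.pow k, (latticeStabilizer M).pow_mem hPM k, ?_⟩
    rw [ht, ← hk]
    exact signedPermMatrix_mulVec_stdBasis_eq_or _ t 0

/-- a 3-dimensional lattice graph is linearly symmetric iff some signed
permutation matrix of order 3 induces an automorphism of it. -/
theorem linearlySymmetric_iff_order_three (M : Matrix (Fin 3) (Fin 3) ℤ)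
    (hM : M.det ≠ 0) :
    IsLinearlySymmetric M ↔
      ∃ P : Matrix (Fin 3) (Fin 3) ℤ, IsSignedPerm P ∧ P ^ 3 = 1 ∧ P ≠ 1 ∧
        ∃ Q : Matrix (Fin 3) (Fin 3) ℤ, P * M = M * Q :=
  linearlySymmetric_iff_order_three_general M
end

section
/- There are exactly two similarity classes of integer 3×3 matrices with characteristic polynomial X³ − 1: every A ∈ ℤ^{3×3} whose characteristic polynomial is X³ − 1 is similar over ℤ to Q₁ = [[1,0,0],[0,−1,1],[0,−1,0]] or to Q₂ = [[1,0,1],[0,−1,1],[0,−1,0]], and Q₁ and Q₂ are not similar to each other. -/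
open Matrix

/-- `A` and `B` are similar over `ℤ`: `AU = UB` for some unimodular `U`. -/
def SimilarZ (A B : Matrix (Fin 3) (Fin 3) ℤ) : Prop :=
  ∃ U : Matrix (Fin 3) (Fin 3) ℤ, IsUnit U.det ∧ A * U = U * B


/-!
A matrix `A` with characteristic polynomial `X³ - 1` has `det (1 - A) = 0`, so it fixes a
primitive vector, which is the first vector of a `ℤ`-basis. In that basis `A = [[1, *], [0, B]]`
with `tr B = -1`, `det B = 1`. The binary form `v ↦ det (B v, v)` has discriminant
`(tr B)² - 4 det B = -3`, so by reduction of forms it represents `±1`, and `(B v, v)` is then a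
basis in which `B = [[-1, 1], [-1, 0]]`. Hence `A ~ [[1, p, q], [0, -1, 1], [0, -1, 0]]`;
conjugating by shears changes `(p, q)` by `(2x + y, -x + y)`, so only `±(q - p) mod 3` matters,
which leaves `Q₁` and `Q₂`. These are told apart modulo `3` by comparing `Q² + Q + 1`.
-/

open Polynomial

lemma exists_binaryForm_eq_one_of_discr_eq_neg_three (a b c : ℤ) (ha : 0 < a)
    (hd : b ^ 2 - 4 * a * c = -3) : ∃ x y : ℤ, a * x ^ 2 + b * x * y + c * y ^ 2 = 1 := by
  induction hn : a.toNat using Nat.strong_induction_on generalizing a b c with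
  | _ n ih =>
  obtain rfl | ha1 := eq_or_ne a 1
  · exact ⟨1, 0, by ring⟩
  -- `x ↦ x + t y` followed by swapping the variables turns the form into `(c', b', a)` with
  -- `b' ∈ (-a, a]`, and then `4 a c' = b'² + 3` forces `0 < c' < a`.
  set t := (a - b) / (2 * a)
  set b' := b + 2 * a * t
  set c' := a * t ^ 2 + b * t + c
  have hb' : -a < b' ∧ b' ≤ a := by
    have hs := Int.mul_ediv_add_emod (a - b) (2 * a)
    have := Int.emod_nonneg (a - b) (by omega : 2 * a ≠ 0)
    have := Int.emod_lt_of_pos (a - b) (by omega : 0 < 2 * a)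
    constructor <;> linarith
  have hd' : b' ^ 2 - 4 * c' * a = -3 := by linear_combination hd
  have hc' : 0 < c' := by nlinarith
  have hc'a : c' < a := by
    have : 2 ≤ a := by omega
    nlinarith [mul_nonneg (sub_nonneg.2 hb'.2) (by linarith : 0 ≤ a + b')]
  obtain ⟨x, y, h⟩ := ih c'.toNat (by omega) c' b' a hc' hd' rfl
  exact ⟨y + t * x, x, by linear_combination h⟩

lemma exists_isUnit_binaryForm_of_discr_eq_neg_three (a b c : ℤ)
    (hd : b ^ 2 - 4 * a * c = -3) : ∃ x y : ℤ, IsUnit (a * x ^ 2 + b * x * y + c * y ^ 2) := by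
  rcases lt_trichotomy a 0 with ha | rfl | ha
  · obtain ⟨x, y, h⟩ := exists_binaryForm_eq_one_of_discr_eq_neg_three (-a) (-b) (-c)
      (by omega) (by linear_combination hd)
    refine ⟨x, y, (IsUnit.neg_iff _).1 ?_⟩
    rw [show -(a * x ^ 2 + b * x * y + c * y ^ 2) = 1 by linear_combination h]
    exact isUnit_one
  · nlinarith [sq_nonneg b]
  · obtain ⟨x, y, h⟩ := exists_binaryForm_eq_one_of_discr_eq_neg_three a b c ha hd
    exact ⟨x, y, h ▸ isUnit_one⟩

lemma exists_similar_of_trace_eq_neg_one_of_det_eq_one (B : Matrix (Fin 2) (Fin 2) ℤ)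
    (htr : B.trace = -1) (hdet : B.det = 1) :
    ∃ V : Matrix (Fin 2) (Fin 2) ℤ, IsUnit V.det ∧ B * V = V * !![-1, 1; -1, 0] := by
  obtain ⟨a, b, c, d, rfl⟩ : ∃ a b c d, B = !![a, b; c, d] := ⟨_, _, _, _, eta_fin_two B⟩
  rw [trace_fin_two_of] at htr
  rw [det_fin_two_of] at hdet
  obtain ⟨x, y, h⟩ := exists_isUnit_binaryForm_of_discr_eq_neg_three c (d - a) (-b)
    (by linear_combination (a + d - 1) * htr - 4 * hdet)
  refine ⟨!![a * x + b * y, x; c * x + d * y, y], ?_, ?_⟩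
  · rw [det_fin_two_of, ← IsUnit.neg_iff]
    convert h using 1
    ring
  · rw [mul_fin_two, mul_fin_two]
    simp only [EmbeddingLike.apply_eq_iff_eq, vecCons_inj, and_true]
    refine ⟨⟨?_, by ring⟩, ?_, by ring⟩
    · linear_combination (a * x + b * y) * htr - x * hdet
    · linear_combination (c * x + d * y) * htr - y * hdet

lemma exists_gcd_eq_one_mulVec_eq_self {ι : Type*} [Fintype ι] [DecidableEq ι]
    (A : Matrix ι ι ℤ) (h : (1 - A).det = 0) :
    ∃ u : ι → ℤ, Finset.univ.gcd u = 1 ∧ A *ᵥ u = u := by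
  obtain ⟨v, hv0, hv⟩ := exists_mulVec_eq_zero_iff.mpr h
  obtain ⟨i, -⟩ := Function.ne_iff.mp hv0
  obtain ⟨u, hvu, hu⟩ := Finset.univ.extract_gcd v ⟨i, Finset.mem_univ i⟩
  have hv_smul : v = Finset.univ.gcd v • u := funext fun j => hvu j (Finset.mem_univ j)
  have hg : Finset.univ.gcd v ≠ 0 := fun h0 => hv0 (by simpa [h0] using hv_smul)
  refine ⟨u, hu, smul_right_injective _ hg ?_⟩
  rw [sub_mulVec, one_mulVec, sub_eq_zero, hv_smul, mulVec_smul] at hv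
  exact hv.symm

/-- Writing `u = (g a', g b', c)` with `g = gcd (u 0) (u 1)`, `a' x + b' y = 1` and `z g + w c = 1`,
the matrix `!![g a', -y, -w a'; g b', x, -w b'; c, 0, z]` has determinant
`(a' x + b' y) (z g + w c) = 1`. -/
lemma exists_isUnit_det_mulVec_single_eq (u : Fin 3 → ℤ) (hu : Finset.univ.gcd u = 1) :
    ∃ U : Matrix (Fin 3) (Fin 3) ℤ, IsUnit U.det ∧ U *ᵥ Pi.single 0 1 = u := by
  obtain ⟨a', b', ha, hb, hab⟩ := extract_gcd (u 0) (u 1)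
  obtain ⟨x, y, hxy⟩ := (gcd_isUnit_iff a' b').mp hab
  have hgc : IsCoprime (gcd (u 0) (u 1)) (u 2) := by
    have hu3 : Finset.univ.gcd u = gcd (u 0) (gcd (u 1) (normalize (u 2))) := by
      simp [Finset.gcd_def, Fin.univ_succ]
    rw [← gcd_isUnit_iff, gcd_assoc, ← (normalize_associated (u 2)).gcd_eq_right, ← hu3, hu]
    exact isUnit_one
  obtain ⟨z, w, hzw⟩ := hgc
  set g := gcd (u 0) (u 1)
  refine ⟨!![g * a', -y, -w * a'; g * b', x, -w * b'; u 2, 0, z], ?_, ?_⟩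
  · have hdet : (!![g * a', -y, -w * a'; g * b', x, -w * b'; u 2, 0, z]).det = 1 := by
      simp only [det_fin_three, of_apply, cons_val', cons_val_zero, cons_val_one, cons_val_fin_one,
        cons_val]
      linear_combination (z * g + w * u 2) * hxy + hzw
    exact hdet ▸ isUnit_one
  · ext i
    fin_cases i <;> simp [ha, hb]

lemma SimilarZ.trans {A B C : Matrix (Fin 3) (Fin 3) ℤ} (h₁ : SimilarZ A B)
    (h₂ : SimilarZ B C) : SimilarZ A C := by
  obtain ⟨U, hU, hAB⟩ := h₁
  obtain ⟨V, hV, hBC⟩ := h₂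
  exact ⟨U * V, by rw [det_mul]; exact hU.mul hV,
    by rw [← mul_assoc, hAB, mul_assoc, hBC, mul_assoc]⟩

lemma SimilarZ.charpoly_eq {A B : Matrix (Fin 3) (Fin 3) ℤ} (h : SimilarZ A B) :
    A.charpoly = B.charpoly := by
  obtain ⟨U, hU, hAB⟩ := h
  obtain ⟨W, rfl⟩ := (isUnit_iff_isUnit_det U).mpr hU
  rw [← charpoly_units_conj' W A, mul_assoc, hAB, ← mul_assoc]
  simp

lemma exists_similarZ_mulVec_single_eq_single (A : Matrix (Fin 3) (Fin 3) ℤ)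
    (h : (1 - A).det = 0) :
    ∃ A', SimilarZ A A' ∧ A' *ᵥ Pi.single 0 1 = Pi.single 0 1 := by
  obtain ⟨u, hu, hAu⟩ := exists_gcd_eq_one_mulVec_eq_self A h
  obtain ⟨U, hU, hUe⟩ := exists_isUnit_det_mulVec_single_eq u hu
  refine ⟨U⁻¹ * A * U, ⟨U, hU, ?_⟩, ?_⟩
  · rw [← mul_assoc, ← mul_assoc, mul_nonsing_inv _ hU, one_mul]
  · rw [← mulVec_mulVec, hUe, ← mulVec_mulVec, hAu, ← hUe, mulVec_mulVec, nonsing_inv_mul _ hU,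
      one_mulVec]

/-- `Qmat 0 0` and `Qmat 0 1` are the matrices `Q₁` and `Q₂`. -/
def Qmat (p q : ℤ) : Matrix (Fin 3) (Fin 3) ℤ := !![1, p, q; 0, -1, 1; 0, -1, 0]

lemma exists_similarZ_Qmat_of_mulVec_single (A : Matrix (Fin 3) (Fin 3) ℤ)
    (h0 : A *ᵥ Pi.single 0 1 = Pi.single 0 1) (htr : A.trace = 0) (hdet : A.det = 1) :
    ∃ p q : ℤ, SimilarZ A (Qmat p q) := by
  rw [mulVec_single_one] at h0
  obtain ⟨p, q, a, b, c, d, rfl⟩ : ∃ p q a b c d, A = !![1, p, q; 0, a, b; 0, c, d] :=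
    ⟨_, _, _, _, _, _, (eta_fin_three A).trans <| by
      rw [show A 0 0 = 1 by simpa using congrFun h0 0, show A 1 0 = 0 by simpa using congrFun h0 1,
        show A 2 0 = 0 by simpa using congrFun h0 2]⟩
  rw [trace_fin_three_of] at htr
  obtain ⟨V, hV, hBV⟩ := exists_similar_of_trace_eq_neg_one_of_det_eq_one !![a, b; c, d]
    (by rw [trace_fin_two_of]; linarith) (by simpa [det_fin_three] using hdet)
  obtain ⟨e, f, g, h, rfl⟩ : ∃ e f g h, V = !![e, f; g, h] := ⟨_, _, _, _, eta_fin_two V⟩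
  refine ⟨p * e + q * g, p * f + q * h, !![1, 0, 0; 0, e, f; 0, g, h], ?_, ?_⟩
  · simpa [det_fin_three, det_fin_two_of] using hV
  · rw [mul_fin_two, mul_fin_two] at hBV
    rw [Qmat, mul_fin_three, mul_fin_three]
    simp only [EmbeddingLike.apply_eq_iff_eq, vecCons_inj, and_true] at hBV ⊢
    refine ⟨⟨?_, ?_, ?_⟩, ⟨?_, ?_, ?_⟩, ?_, ?_, ?_⟩ <;> linarith

lemma exists_similarZ_Qmat (A : Matrix (Fin 3) (Fin 3) ℤ) (hA : A.charpoly = X ^ 3 - 1) :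
    ∃ p q : ℤ, SimilarZ A (Qmat p q) := by
  obtain ⟨A', hAA', h0⟩ := exists_similarZ_mulVec_single_eq_single A
    (by simpa [hA] using (eval_charpoly A 1).symm)
  have hA' : A'.charpoly = X ^ 3 - 1 := hAA'.charpoly_eq ▸ hA
  obtain ⟨p, q, h⟩ := exists_similarZ_Qmat_of_mulVec_single A' h0
    (by simpa [hA', coeff_one] using trace_eq_neg_charpoly_coeff A')
    (by simpa [hA'] using det_eq_sign_charpoly_coeff A')
  exact ⟨p, q, hAA'.trans h⟩

lemma similarZ_Qmat_shear (p q x y : ℤ) :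
    SimilarZ (Qmat p q) (Qmat (p + 2 * x + y) (q - x + y)) := by
  refine ⟨!![1, x, y; 0, 1, 0; 0, 0, 1], by simp [det_fin_three], ?_⟩
  rw [Qmat, Qmat, mul_fin_three, mul_fin_three]
  simp only [EmbeddingLike.apply_eq_iff_eq, vecCons_inj, and_true]
  refine ⟨⟨?_, ?_, ?_⟩, ⟨?_, ?_, ?_⟩, ?_, ?_, ?_⟩ <;> ring

lemma similarZ_Qmat_neg (p q : ℤ) : SimilarZ (Qmat p q) (Qmat (-p) (-q)) := by
  refine ⟨!![-1, 0, 0; 0, 1, 0; 0, 0, 1], by simp [det_fin_three], ?_⟩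
  rw [Qmat, Qmat, mul_fin_three, mul_fin_three]
  simp only [EmbeddingLike.apply_eq_iff_eq, vecCons_inj, and_true]
  refine ⟨⟨?_, ?_, ?_⟩, ⟨?_, ?_, ?_⟩, ?_, ?_, ?_⟩ <;> ring

lemma similarZ_Qmat_emod_three (p q : ℤ) : SimilarZ (Qmat p q) (Qmat 0 ((q - p) % 3)) := by
  convert similarZ_Qmat_shear p q ((q - p) / 3) (-p - 2 * ((q - p) / 3)) using 2
  · ring
  · have := Int.mul_ediv_add_emod (q - p) 3
    linarith

lemma similarZ_Qmat_zero_zero_or_zero_one (p q : ℤ) :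
    SimilarZ (Qmat p q) (Qmat 0 0) ∨ SimilarZ (Qmat p q) (Qmat 0 1) := by
  have h := similarZ_Qmat_emod_three p q
  have h0 : 0 ≤ (q - p) % 3 := Int.emod_nonneg _ (by norm_num)
  have h3 : (q - p) % 3 < 3 := Int.emod_lt_of_pos _ (by norm_num)
  interval_cases (q - p) % 3
  · exact .inl h
  · exact .inr h
  · refine .inr (h.trans ((similarZ_Qmat_neg 0 2).trans ?_))
    simpa using similarZ_Qmat_emod_three 0 (-2)

/-- With `N = Q² + Q + 1`, which is `!![3, 0, 0; 0, 0, 0; 0, 0, 0]` for `Q₁` and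
`!![3, -1, 2; 0, 0, 0; 0, 0, 0]` for `Q₂`, the relation `N₁ U = U N₂` forces the first column
of `U` to be `(-3 U₀₁, 0, 0)`, so `3 ∣ det U`. -/
lemma not_similarZ_Qmat_zero_zero_Qmat_zero_one : ¬ SimilarZ (Qmat 0 0) (Qmat 0 1) := by
  rintro ⟨U, hU, hQU⟩
  have hN : (Qmat 0 0 ^ 2 + Qmat 0 0 + 1) * U = U * (Qmat 0 1 ^ 2 + Qmat 0 1 + 1) :=
    ((((SemiconjBy.pow_right hQU.symm 2).add_right hQU.symm).add_right (.one_right U))).eq.symm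
  have hN₁ : Qmat 0 0 ^ 2 + Qmat 0 0 + 1 = !![3, 0, 0; 0, 0, 0; 0, 0, 0] := by
    ext i j; fin_cases i <;> fin_cases j <;> simp [Qmat, sq]
  have hN₂ : Qmat 0 1 ^ 2 + Qmat 0 1 + 1 = !![3, -1, 2; 0, 0, 0; 0, 0, 0] := by
    ext i j; fin_cases i <;> fin_cases j <;> simp [Qmat, sq]
  rw [hN₁, hN₂] at hN
  have h0 : 3 * U 0 1 = -U 0 0 := by
    simpa [mul_apply, Fin.sum_univ_three] using congrFun₂ hN 0 1
  have h1 : U 1 0 = 0 := by simpa [mul_apply, Fin.sum_univ_three] using congrFun₂ hN 1 1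
  have h2 : U 2 0 = 0 := by simpa [mul_apply, Fin.sum_univ_three] using congrFun₂ hN 2 1
  have h3 : (3 : ℤ) ∣ U.det := by
    rw [det_fin_three, h1, h2]
    exact ⟨-U 0 1 * (U 1 1 * U 2 2 - U 1 2 * U 2 1),
      by linear_combination (U 1 1 * U 2 2 - U 1 2 * U 2 1) * h0⟩
  rcases Int.isUnit_iff.mp hU with h | h <;> rw [h] at h3 <;> norm_num at h3

open Polynomial in
/-- there are exactly two similarity classes of integer `3×3` matrices with
characteristic polynomial `X³ - 1`. -/
theorem similarity_classes_charpoly_X_cubed_sub_one :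
    (∀ A : Matrix (Fin 3) (Fin 3) ℤ, A.charpoly = X ^ 3 - 1 →
      SimilarZ A !![1, 0, 0; 0, -1, 1; 0, -1, 0] ∨
      SimilarZ A !![1, 0, 1; 0, -1, 1; 0, -1, 0]) ∧
    ¬ SimilarZ !![1, 0, 0; 0, -1, 1; 0, -1, 0] !![1, 0, 1; 0, -1, 1; 0, -1, 0] := by
  refine ⟨fun A hA => ?_, not_similarZ_Qmat_zero_zero_Qmat_zero_one⟩
  obtain ⟨p, q, h⟩ := exists_similarZ_Qmat A hA
  exact (similarZ_Qmat_zero_zero_or_zero_one p q).imp h.trans h.trans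
end
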